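/- arXiv:2601.16846 — 7 statements merged into one kernel-verified Lean document; each statement's English description precedes it below -/
import Mathlib

section
/- Let E be a real inner product space and let r > 1 be a real number. For all vectors a, b ∈ E and all real numbers s, t with s ≥ 0 and t > 0, one has ‖a‖^r + (r−1)·(s/t)^r·‖b‖^r − r·(s/t)^{r−1}·‖b‖^{r−2}·⟨b, a⟩ ≥ 0, where all powers are real powers and, when b = 0, the last term is 0 (automatic since ⟨b, a⟩ = 0). -/
open scoped RealInnerProductSpace

lemma picone_aux {X Y r : ℝ} (hr : 1 < r) (hX : 0 ≤ X) (hY : 0 ≤ Y) :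
    r * (Y ^ (r - 1) * X) ≤ X ^ r + (r - 1) * Y ^ r := by
  have hr0 : (0:ℝ) < r := lt_trans one_pos hr
  have hr1 : (0:ℝ) < r - 1 := by linarith
  have hpq : Real.HolderConjugate r (r / (r - 1)) := by
    rw [Real.holderConjugate_iff]
    constructor
    · exact hr
    · field_simp; ring
  have h := Real.young_inequality_of_nonneg hX (Real.rpow_nonneg hY (r - 1)) hpq
  have hYq : (Y ^ (r - 1)) ^ (r / (r - 1)) = Y ^ r := by
    rw [← Real.rpow_mul hY]
    congr 1
    field_simp
  rw [hYq] at h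
  have : X * Y ^ (r - 1) ≤ X ^ r / r + Y ^ r / (r / (r - 1)) := h
  have hq : Y ^ r / (r / (r - 1)) = (r - 1) * Y ^ r / r := by
    field_simp
  rw [hq] at this
  have := mul_le_mul_of_nonneg_left this hr0.le
  calc r * (Y ^ (r - 1) * X) = r * (X * Y ^ (r - 1)) := by ring
    _ ≤ r * (X ^ r / r + (r - 1) * Y ^ r / r) := this
    _ = X ^ r + (r - 1) * Y ^ r := by field_simp

/-- Pointwise Picone inequality. -/
theorem picone_pointwise_inequality
    {E : Type*} [NormedAddCommGroup E] [InnerProductSpace ℝ E]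
    (r : ℝ) (hr : 1 < r) (a b : E) (s t : ℝ) (hs : 0 ≤ s) (ht : 0 < t) :
    0 ≤ ‖a‖ ^ r + (r - 1) * (s / t) ^ r * ‖b‖ ^ r
        - r * (s / t) ^ (r - 1) * ‖b‖ ^ (r - 2) * ⟪b, a⟫ := by
  have hr0 : (0:ℝ) < r := lt_trans one_pos hr
  set c : ℝ := s / t with hc
  have hc0 : 0 ≤ c := div_nonneg hs ht.le
  rcases eq_or_ne b 0 with rfl | hb
  · simp [Real.zero_rpow (ne_of_gt hr0)]
    positivity
  · have hbn : (0:ℝ) < ‖b‖ := norm_pos_iff.mpr hb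
    have h1 : ‖b‖ ^ (r - 2) * ⟪b, a⟫ ≤ ‖b‖ ^ (r - 1) * ‖a‖ := by
      have hcs : ⟪b, a⟫ ≤ ‖b‖ * ‖a‖ := real_inner_le_norm b a
      have h2 : ‖b‖ ^ (r - 2) * ⟪b, a⟫ ≤ ‖b‖ ^ (r - 2) * (‖b‖ * ‖a‖) :=
        mul_le_mul_of_nonneg_left hcs (Real.rpow_nonneg hbn.le _)
      calc ‖b‖ ^ (r - 2) * ⟪b, a⟫ ≤ ‖b‖ ^ (r - 2) * (‖b‖ * ‖a‖) := h2
        _ = ‖b‖ ^ (r - 1) * ‖a‖ := by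
            rw [show r - 1 = (r - 2) + 1 by ring, Real.rpow_add hbn,
              Real.rpow_one]; ring
    have h3 : r * c ^ (r - 1) * ‖b‖ ^ (r - 2) * ⟪b, a⟫
        ≤ r * ((c * ‖b‖) ^ (r - 1) * ‖a‖) := by
      have := mul_le_mul_of_nonneg_left h1
        (mul_nonneg hr0.le (Real.rpow_nonneg hc0 (r - 1)))
      calc r * c ^ (r - 1) * ‖b‖ ^ (r - 2) * ⟪b, a⟫
          = r * c ^ (r - 1) * (‖b‖ ^ (r - 2) * ⟪b, a⟫) := by ring
        _ ≤ r * c ^ (r - 1) * (‖b‖ ^ (r - 1) * ‖a‖) := this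
        _ = r * ((c * ‖b‖) ^ (r - 1) * ‖a‖) := by
            rw [Real.mul_rpow hc0 hbn.le]; ring
    have h4 : r * ((c * ‖b‖) ^ (r - 1) * ‖a‖) ≤ ‖a‖ ^ r + (r - 1) * (c * ‖b‖) ^ r :=
      picone_aux hr (norm_nonneg a) (mul_nonneg hc0 hbn.le)
    have h5 : (c * ‖b‖) ^ r = c ^ r * ‖b‖ ^ r := Real.mul_rpow hc0 hbn.le
    nlinarith [h3, h4]
end

section
/- Let E be a real inner product space and let r > 1 be a real number. Let a, b ∈ E and let s, t be real numbers with s ≥ 0 and t > 0. Then ‖a‖^r + (r−1)·(s/t)^r·‖b‖^r − r·(s/t)^{r−1}·‖b‖^{r−2}·⟨b, a⟩ = 0 if and only if a = (s/t) • b. -/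
open scoped RealInnerProductSpace

open Real in
lemma picone_young_aux {r : ℝ} (hr : 1 < r) {x y : ℝ} (hx : 0 ≤ x) (hy : 0 ≤ y) :
    0 ≤ x ^ r + (r - 1) * y ^ r - r * x * y ^ (r - 1) ∧
      (x ^ r + (r - 1) * y ^ r - r * x * y ^ (r - 1) = 0 ↔ x = y) := by
  have hr0 : (0:ℝ) < r := by linarith
  rcases eq_or_lt_of_le hy with h0 | hy'
  · have h0 : y = 0 := h0.symm
    subst h0
    rw [zero_rpow hr0.ne', zero_rpow (by linarith : r - 1 ≠ 0)]
    simp only [mul_zero, add_zero, sub_zero]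
    constructor
    · exact rpow_nonneg hx r
    · rw [rpow_eq_zero hx hr0.ne']
  · -- y > 0
    have hyne : y ≠ 0 := hy'.ne'
    have key : x ^ r = (x / y) ^ r * y ^ r := by
      rw [div_rpow hx hy'.le, div_mul_cancel₀]
      exact (rpow_pos_of_pos hy' r).ne'
    have key2 : y ^ r = y ^ (r - 1) * y := by
      rw [← rpow_add_one hyne (r - 1)]; ring_nf
    have hs : -1 ≤ x / y - 1 := by
      have := div_nonneg hx hy'.le; linarith
    have h1s : 1 + (x / y - 1) = x / y := by ring
    have hiden : x ^ r + (r - 1) * y ^ r - r * x * y ^ (r - 1)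
        = y ^ r * ((x / y) ^ r - (1 + r * (x / y - 1))) := by
      rw [key, key2]
      field_simp
      ring
    have hB : 1 + r * (x / y - 1) ≤ (x / y) ^ r := by
      have := one_add_mul_self_le_rpow_one_add hs hr.le
      rwa [h1s] at this
    constructor
    · rw [hiden]
      exact mul_nonneg (rpow_nonneg hy'.le r) (by linarith)
    · constructor
      · intro h
        by_contra hxy
        have hne : x / y - 1 ≠ 0 := by
          intro hc
          apply hxy
          have : x / y = 1 := by linarith
          field_simp at this; linarith
        have hBs : 1 + r * (x / y - 1) < (x / y) ^ r := by
          have := one_add_mul_self_lt_rpow_one_add hs hne hr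
          rwa [h1s] at this
        have : 0 < y ^ r * ((x / y) ^ r - (1 + r * (x / y - 1))) :=
          mul_pos (rpow_pos_of_pos hy' r) (by linarith)
        rw [hiden] at h
        linarith
      · rintro rfl
        rw [hiden]
        have : x / x = 1 := div_self hyne
        rw [this]
        simp

/-- Equality case of the pointwise Picone inequality. -/
theorem picone_pointwise_equality_iff
    {E : Type*} [NormedAddCommGroup E] [InnerProductSpace ℝ E]
    (r : ℝ) (hr : 1 < r) (a b : E) (s t : ℝ) (hs : 0 ≤ s) (ht : 0 < t) :
    ‖a‖ ^ r + (r - 1) * (s / t) ^ r * ‖b‖ ^ r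
        - r * (s / t) ^ (r - 1) * ‖b‖ ^ (r - 2) * ⟪b, a⟫ = 0
      ↔ a = (s / t) • b := by
  set c : ℝ := s / t with hc
  have hc0 : 0 ≤ c := div_nonneg hs ht.le
  have hr0 : (0:ℝ) < r := by linarith
  by_cases hb : b = 0
  · subst hb
    simp only [inner_zero_left, mul_zero, sub_zero, norm_zero, smul_zero,
      Real.zero_rpow hr0.ne', mul_zero, add_zero]
    rw [Real.rpow_eq_zero (norm_nonneg a) hr0.ne', norm_eq_zero]
  · have hbn : (0:ℝ) < ‖b‖ := norm_pos_iff.mpr hb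
    -- key rewriting of the expression
    have hcs : ⟪b, a⟫ ≤ ‖b‖ * ‖a‖ := real_inner_le_norm b a
    set D : ℝ := ‖b‖ * ‖a‖ - ⟪b, a⟫ with hD
    have hD0 : 0 ≤ D := by simp [hD]; linarith
    have hbr1 : ‖b‖ ^ (r - 2) * ‖b‖ = ‖b‖ ^ (r - 1) := by
      rw [← Real.rpow_add_one hbn.ne' (r - 2)]; ring_nf
    have hcb_r : c ^ r * ‖b‖ ^ r = (c * ‖b‖) ^ r := (Real.mul_rpow hc0 hbn.le).symm
    have hcb_r1 : c ^ (r - 1) * ‖b‖ ^ (r - 1) = (c * ‖b‖) ^ (r - 1) :=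
      (Real.mul_rpow hc0 hbn.le).symm
    obtain ⟨hY0, hYeq⟩ := picone_young_aux hr (norm_nonneg a) (mul_nonneg hc0 hbn.le)
    set T1 : ℝ := ‖a‖ ^ r + (r - 1) * (c * ‖b‖) ^ r - r * ‖a‖ * (c * ‖b‖) ^ (r - 1) with hT1
    set T2 : ℝ := r * c ^ (r - 1) * ‖b‖ ^ (r - 2) * D with hT2
    have hT20 : 0 ≤ T2 :=
      mul_nonneg (mul_nonneg (mul_nonneg hr0.le (Real.rpow_nonneg hc0 _))
        (Real.rpow_nonneg hbn.le _)) hD0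
    have hsplit : ‖a‖ ^ r + (r - 1) * c ^ r * ‖b‖ ^ r
        - r * c ^ (r - 1) * ‖b‖ ^ (r - 2) * ⟪b, a⟫ = T1 + T2 := by
      rw [hT1, hT2, hD, ← hcb_r, ← hcb_r1, ← hbr1]
      ring
    rw [hsplit]
    have hiff : T1 + T2 = 0 ↔ T1 = 0 ∧ T2 = 0 := by
      constructor
      · intro h
        constructor <;> linarith
      · rintro ⟨h1, h2⟩; rw [h1, h2, add_zero]
    rw [hiff]
    constructor
    · rintro ⟨h1, h2⟩
      have hna : ‖a‖ = c * ‖b‖ := hYeq.mp h1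
      rcases eq_or_lt_of_le hc0 with hc0' | hcpos
      · -- c = 0
        have : ‖a‖ = 0 := by rw [hna, ← hc0']; ring
        rw [← hc0', zero_smul]
        exact norm_eq_zero.mp this
      · -- c > 0, so D = 0
        have hDz : D = 0 := by
          have hrc : 0 < r * c ^ (r - 1) * ‖b‖ ^ (r - 2) :=
            mul_pos (mul_pos hr0 (Real.rpow_pos_of_pos hcpos _))
              (Real.rpow_pos_of_pos hbn _)
          by_contra hDne
          have : 0 < T2 := mul_pos hrc (lt_of_le_of_ne hD0 (Ne.symm hDne))
          linarith
        have hinner : ⟪b, a⟫ = ‖b‖ * ‖a‖ := by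
          rw [hD] at hDz; linarith
        have := inner_eq_norm_mul_iff_real.mp hinner
        -- ‖a‖ • b = ‖b‖ • a
        rw [hna] at this
        have h2 : (c * ‖b‖) • b = ‖b‖ • a := this
        have : a = c • b := by
          have h3 : ‖b‖ • (c • b) = ‖b‖ • a := by
            rw [smul_smul, mul_comm]; exact h2
          exact (smul_right_injective E hbn.ne' h3).symm
        exact this
    · rintro rfl
      have hna : ‖c • b‖ = c * ‖b‖ := by
        rw [norm_smul, Real.norm_eq_abs, abs_of_nonneg hc0]
      constructor
      · rw [hT1]; exact hYeq.mpr hna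
      · have : ⟪b, c • b⟫ = c * (‖b‖ * ‖b‖) := by
          rw [real_inner_smul_right, real_inner_self_eq_norm_mul_norm]
        have hDz : D = 0 := by rw [hD, hna, this]; ring
        rw [hT2, hDz, mul_zero]
end

section
/- Let E be a real inner product space, r > 1 a real number, and u, v : E → ℝ functions that are differentiable at a point x₀ ∈ E, with u(x) ≥ 0 for all x ∈ E and v(x₀) > 0. Then the function w(x) := u(x)^r / v(x)^{r−1} is differentiable at x₀ with gradient ∇w(x₀) = r·(u(x₀)/v(x₀))^{r−1}·∇u(x₀) − (r−1)·(u(x₀)/v(x₀))^r·∇v(x₀). Consequently ‖∇u(x₀)‖^r − ‖∇v(x₀)‖^{r−2}·⟨∇v(x₀), ∇w(x₀)⟩ = ‖∇u(x₀)‖^r + (r−1)·(u(x₀)/v(x₀))^r·‖∇v(x₀)‖^r − r·(u(x₀)/v(x₀))^{r−1}·‖∇v(x₀)‖^{r−2}·⟨∇v(x₀), ∇u(x₀)⟩ (the identity R_r(u,v) = L_r(u,v) of Picone's identity). -/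
open scoped RealInnerProductSpace

/-- Picone's identity: differentiability of `u^r / v^(r-1)`, the formula for its
gradient, and the identity `R_r(u,v) = L_r(u,v)`. -/
theorem picone_identity
    {E : Type*} [NormedAddCommGroup E] [InnerProductSpace ℝ E] [CompleteSpace E]
    (r : ℝ) (hr : 1 < r) (u v : E → ℝ) (x₀ : E)
    (hu : DifferentiableAt ℝ u x₀) (hv : DifferentiableAt ℝ v x₀)
    (hu0 : ∀ x, 0 ≤ u x) (hv0 : 0 < v x₀) :
    HasGradientAt (fun x => u x ^ r / v x ^ (r - 1))
      ((r * (u x₀ / v x₀) ^ (r - 1)) • gradient u x₀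
        - ((r - 1) * (u x₀ / v x₀) ^ r) • gradient v x₀) x₀ ∧
    ‖gradient u x₀‖ ^ r - ‖gradient v x₀‖ ^ (r - 2) *
        ⟪gradient v x₀, (r * (u x₀ / v x₀) ^ (r - 1)) • gradient u x₀
          - ((r - 1) * (u x₀ / v x₀) ^ r) • gradient v x₀⟫
      = ‖gradient u x₀‖ ^ r + (r - 1) * (u x₀ / v x₀) ^ r * ‖gradient v x₀‖ ^ r
        - r * (u x₀ / v x₀) ^ (r - 1) * ‖gradient v x₀‖ ^ (r - 2) *
            ⟪gradient v x₀, gradient u x₀⟫ := by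
  have hvx : v x₀ ≠ 0 := hv0.ne'
  have hVr1 : (0:ℝ) < v x₀ ^ (r - 1) := Real.rpow_pos_of_pos hv0 _
  have hVr : (0:ℝ) < v x₀ ^ r := Real.rpow_pos_of_pos hv0 _
  constructor
  · have hU : HasFDerivAt (fun x => u x ^ r)
        ((r * u x₀ ^ (r - 1)) • fderiv ℝ u x₀) x₀ :=
      hu.hasFDerivAt.rpow_const (Or.inr hr.le)
    have hV : HasFDerivAt (fun x => v x ^ (-(r - 1)))
        ((-(r - 1) * v x₀ ^ (-(r - 1) - 1)) • fderiv ℝ v x₀) x₀ :=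
      hv.hasFDerivAt.rpow_const (Or.inl hvx)
    have hW := hU.mul hV
    have heq : (fun x => u x ^ r / v x ^ (r - 1))
        =ᶠ[nhds x₀] fun x => u x ^ r * v x ^ (-(r - 1)) := by
      have hpos : v ⁻¹' Set.Ioi 0 ∈ nhds x₀ :=
        hv.continuousAt.preimage_mem_nhds (Ioi_mem_nhds hv0)
      filter_upwards [hpos] with x hx
      rw [Real.rpow_neg hx.le, div_eq_mul_inv]
    have hW' : HasFDerivAt (fun x => u x ^ r / v x ^ (r - 1))
        (u x₀ ^ r • ((-(r - 1) * v x₀ ^ (-(r - 1) - 1)) • fderiv ℝ v x₀)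
          + v x₀ ^ (-(r - 1)) • ((r * u x₀ ^ (r - 1)) • fderiv ℝ u x₀)) x₀ :=
      hW.congr_of_eventuallyEq heq
    rw [hasGradientAt_iff_hasFDerivAt]
    refine hW'.congr_fderiv ?_
    symm
    rw [map_sub, map_smul, map_smul]
    have hgu : (InnerProductSpace.toDual ℝ E) (gradient u x₀) = fderiv ℝ u x₀ := by
      simp [gradient]
    have hgv : (InnerProductSpace.toDual ℝ E) (gradient v x₀) = fderiv ℝ v x₀ := by
      simp [gradient]
    rw [hgu, hgv]
    have ha : r * (u x₀ / v x₀) ^ (r - 1) = v x₀ ^ (-(r - 1)) * (r * u x₀ ^ (r - 1)) := by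
      rw [Real.div_rpow (hu0 x₀) hv0.le, Real.rpow_neg hv0.le]
      field_simp
    have hb : (r - 1) * (u x₀ / v x₀) ^ r
        = -(u x₀ ^ r * (-(r - 1) * v x₀ ^ (-(r - 1) - 1))) := by
      have h2 : -(r - 1) - 1 = -r := by ring
      rw [h2, Real.div_rpow (hu0 x₀) hv0.le, Real.rpow_neg hv0.le]
      field_simp
    rw [ha, hb]
    module
  · by_cases h : gradient v x₀ = 0
    · simp only [h, norm_zero, inner_zero_left, mul_zero, sub_zero,
        Real.zero_rpow (show r ≠ 0 by linarith)]
      ring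
    · have hn : (0:ℝ) < ‖gradient v x₀‖ := norm_pos_iff.mpr h
      rw [inner_sub_right, inner_smul_right, inner_smul_right,
        real_inner_self_eq_norm_sq]
      have key : ‖gradient v x₀‖ ^ (r - 2) * ‖gradient v x₀‖ ^ (2:ℕ)
          = ‖gradient v x₀‖ ^ r := by
        rw [← Real.rpow_natCast _ 2, ← Real.rpow_add hn]
        norm_num
      linear_combination (r - 1) * (u x₀ / v x₀) ^ r * key
end

section
/- Let E be a real inner product space, Ω ⊆ E a nonempty open connected set, and r > 1 a real number. Let u, v : E → ℝ be differentiable at every point of Ω, with u(x) ≥ 0 and v(x) > 0 for all x ∈ Ω. If for every x ∈ Ω one has ‖∇u(x)‖^r + (r−1)·(u(x)/v(x))^r·‖∇v(x)‖^r − r·(u(x)/v(x))^{r−1}·‖∇v(x)‖^{r−2}·⟨∇v(x), ∇u(x)⟩ = 0, then there exists a constant k ≥ 0 such that u(x) = k·v(x) for all x ∈ Ω. -/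
open scoped RealInnerProductSpace

/-- Young-type strictness: if `a^r + (r-1)c^r - r c^{r-1} a ≤ 0` with `a ≥ 0 < c`, then `a = c`. -/
lemma young_rigid {r a c : ℝ} (hr : 1 < r) (ha : 0 ≤ a) (hc : 0 < c)
    (h : a ^ r + (r - 1) * c ^ r - r * c ^ (r - 1) * a ≤ 0) : a = c := by
  by_contra hne
  set s : ℝ := a / c with hs
  have hs0 : 0 ≤ s := div_nonneg ha hc.le
  have hs1 : s - 1 ≠ 0 := by
    intro h0
    apply hne
    have : s = 1 := by linarith
    field_simp [hs] at this
    rw [hs, div_eq_one_iff_eq hc.ne'] at this; exact this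
  have hbern := one_add_mul_self_lt_rpow_one_add (by linarith : (-1:ℝ) ≤ s - 1) hs1 hr
  rw [show (1 : ℝ) + (s - 1) = s by ring] at hbern
  -- hbern : 1 + r * (s - 1) < s ^ r
  have hsr : s ^ r = a ^ r / c ^ r := Real.div_rpow ha hc.le r
  have hcr : c ^ r = c ^ (r - 1) * c := by
    rw [← Real.rpow_add_one hc.ne' (r - 1)]; ring_nf
  have hcrpos : 0 < c ^ r := Real.rpow_pos_of_pos hc r
  have hkey : c ^ r * (1 + r * (s - 1)) < a ^ r := by
    calc c ^ r * (1 + r * (s - 1)) < c ^ r * s ^ r := by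
          exact mul_lt_mul_of_pos_left hbern hcrpos
      _ = a ^ r := by rw [hsr]; field_simp
  have hcs : c ^ r * s = c ^ (r - 1) * a := by
    rw [hcr, hs]; field_simp
  nlinarith [hkey, hcs]

/-- Pointwise rigidity: equality in the Picone inequality forces `A = t • B`. -/
lemma picone_pointwise {F : Type*} [NormedAddCommGroup F] [InnerProductSpace ℝ F]
    {r t : ℝ} (hr : 1 < r) (ht : 0 ≤ t) {A B : F}
    (h : ‖A‖ ^ r + (r - 1) * t ^ r * ‖B‖ ^ r
        - r * t ^ (r - 1) * ‖B‖ ^ (r - 2) * ⟪B, A⟫ = 0) : A = t • B := by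
  have hr0 : r ≠ 0 := by linarith
  have hr1 : r - 1 ≠ 0 := by intro h'; linarith [h']
  rcases eq_or_lt_of_le ht with ht0 | htpos
  · -- t = 0
    rw [← ht0] at h ⊢
    rw [Real.zero_rpow hr0, Real.zero_rpow hr1] at h
    simp only [mul_zero, zero_mul, mul_comm] at h
    have : ‖A‖ ^ r = 0 := by linarith
    have hA : ‖A‖ = 0 := by
      rwa [Real.rpow_eq_zero (norm_nonneg A) hr0] at this
    simp [norm_eq_zero.mp hA]
  rcases eq_or_ne B 0 with hB | hB
  · -- B = 0
    rw [hB] at h ⊢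
    simp only [norm_zero, inner_zero_left, mul_zero] at h
    rw [Real.zero_rpow hr0] at h
    have : ‖A‖ ^ r = 0 := by linarith
    have hA : ‖A‖ = 0 := by
      rwa [Real.rpow_eq_zero (norm_nonneg A) hr0] at this
    simp [norm_eq_zero.mp hA]
  · -- main case : t > 0, B ≠ 0
    have hb : 0 < ‖B‖ := norm_pos_iff.mpr hB
    set a := ‖A‖
    set b := ‖B‖
    set c := t * b with hcdef
    have hcpos : 0 < c := mul_pos htpos hb
    have ha : 0 ≤ a := norm_nonneg A
    have hcoef : 0 < r * t ^ (r - 1) * b ^ (r - 2) :=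
      mul_pos (mul_pos (by linarith) (Real.rpow_pos_of_pos htpos _))
        (Real.rpow_pos_of_pos hb _)
    have hcr : t ^ r * b ^ r = c ^ r := (Real.mul_rpow ht hb.le).symm
    have hbr : b ^ (r - 2) * b = b ^ (r - 1) := by
      rw [← Real.rpow_add_one hb.ne' (r - 2)]; ring_nf
    have hcr1 : t ^ (r - 1) * b ^ (r - 1) = c ^ (r - 1) :=
      (Real.mul_rpow (le_of_lt htpos) hb.le).symm
    have hinner : ⟪B, A⟫ ≤ b * a := real_inner_le_norm B A
    -- the chain of inequalities
    have h1 : a ^ r + (r - 1) * c ^ r - r * c ^ (r - 1) * a ≤ 0 := by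
      have h2 : r * t ^ (r - 1) * b ^ (r - 2) * ⟪B, A⟫
          ≤ r * t ^ (r - 1) * b ^ (r - 2) * (b * a) :=
        mul_le_mul_of_nonneg_left hinner hcoef.le
      have h3 : r * t ^ (r - 1) * b ^ (r - 2) * (b * a) = r * c ^ (r - 1) * a := by
        rw [← hcr1, ← hbr]; ring
      nlinarith [h, hcr, h2, h3]
    have hac : a = c := young_rigid hr ha hcpos h1
    -- now equality must hold in Cauchy–Schwarz
    have hinner' : ⟪B, A⟫ = b * a := by
      by_contra hne
      have hlt : ⟪B, A⟫ < b * a := lt_of_le_of_ne hinner hne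
      have h2 : r * t ^ (r - 1) * b ^ (r - 2) * ⟪B, A⟫
          < r * t ^ (r - 1) * b ^ (r - 2) * (b * a) :=
        mul_lt_mul_of_pos_left hlt hcoef
      have h3 : r * t ^ (r - 1) * b ^ (r - 2) * (b * a) = r * c ^ (r - 1) * a := by
        rw [← hcr1, ← hbr]; ring
      have hyoung : a ^ r + (r - 1) * c ^ r - r * c ^ (r - 1) * a = 0 := by
        rw [hac]
        have : c ^ r = c ^ (r - 1) * c := by
          rw [← Real.rpow_add_one hcpos.ne' (r - 1)]; ring_nf
        rw [this]; ring
      nlinarith [h, hcr, h2, h3, hyoung]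
    have heq : ‖A‖ • B = ‖B‖ • A := by
      rw [← inner_eq_norm_mul_iff_real]
      rw [hinner']
    -- a • B = b • A  with a = c = t*b
    have hA : A = (b⁻¹ * a) • B := by
      have heq' : a • B = b • A := heq
      rw [← smul_smul, heq', smul_smul, inv_mul_cancel₀ hb.ne', one_smul]
    rw [hA, hac, hcdef]
    congr 1
    field_simp

/-- Rigidity part of Picone's identity: if `L_r(u,v)` vanishes identically on a
nonempty open connected set, then `u` is a (nonnegative) constant multiple of `v`. -/
theorem picone_rigidity
    {E : Type*} [NormedAddCommGroup E] [InnerProductSpace ℝ E] [CompleteSpace E]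
    (Ω : Set E) (hΩne : Ω.Nonempty) (hΩo : IsOpen Ω) (hΩc : IsConnected Ω)
    (r : ℝ) (hr : 1 < r) (u v : E → ℝ)
    (hu : ∀ x ∈ Ω, DifferentiableAt ℝ u x) (hv : ∀ x ∈ Ω, DifferentiableAt ℝ v x)
    (hu0 : ∀ x ∈ Ω, 0 ≤ u x) (hv0 : ∀ x ∈ Ω, 0 < v x)
    (hL : ∀ x ∈ Ω,
      ‖gradient u x‖ ^ r + (r - 1) * (u x / v x) ^ r * ‖gradient v x‖ ^ r
        - r * (u x / v x) ^ (r - 1) * ‖gradient v x‖ ^ (r - 2) *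
            ⟪gradient v x, gradient u x⟫ = 0) :
    ∃ k : ℝ, 0 ≤ k ∧ ∀ x ∈ Ω, u x = k * v x := by
  have hgradeq : ∀ x ∈ Ω, gradient u x = (u x / v x) • gradient v x := fun x hx =>
    picone_pointwise hr (div_nonneg (hu0 x hx) (hv0 x hx).le) (hL x hx)
  have hfd : ∀ x ∈ Ω, fderiv ℝ u x = (u x / v x) • fderiv ℝ v x := by
    intro x hx
    have h := congrArg (InnerProductSpace.toDual ℝ E) (hgradeq x hx)
    simpa [gradient, map_smul] using h
  set f : E → ℝ := fun y => u y * (v y)⁻¹ with hfdef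
  have hfdiff : ∀ x ∈ Ω, DifferentiableAt ℝ f x := fun x hx =>
    (hu x hx).mul ((hv x hx).inv (hv0 x hx).ne')
  have hf0 : ∀ x ∈ Ω, fderiv ℝ f x = 0 := by
    intro x hx
    have hvx : v x ≠ 0 := (hv0 x hx).ne'
    have hinv : fderiv ℝ (fun y => (v y)⁻¹) x = (-(v x ^ 2)⁻¹) • fderiv ℝ v x := by
      have h1 : fderiv ℝ (fun y => (v y)⁻¹) x
          = (fderiv ℝ (fun z : ℝ => z⁻¹) (v x)).comp (fderiv ℝ v x) :=
        fderiv_comp x (differentiableAt_inv hvx) (hv x hx)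
      rw [h1, fderiv_inv]
      ext y
      simp [mul_comm]
    rw [hfdef]
    rw [fderiv_fun_mul (hu x hx) (show DifferentiableAt ℝ (fun y => (v y)⁻¹) x from (hv x hx).inv hvx), hinv, hfd x hx]
    ext y
    simp only [ContinuousLinearMap.add_apply, ContinuousLinearMap.coe_smul',
      Pi.smul_apply, smul_eq_mul, ContinuousLinearMap.zero_apply]
    field_simp
    ring
  -- local constancy of f on Ω
  have hloc : ∀ x ∈ Ω, ∃ ε > 0, Metric.ball x ε ⊆ Ω ∧
      ∀ y ∈ Metric.ball x ε, f y = f x := by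
    intro x hx
    obtain ⟨ε, hε, hball⟩ := Metric.isOpen_iff.mp hΩo x hx
    refine ⟨ε, hε, hball, fun y hy => ?_⟩
    have hdiff : DifferentiableOn ℝ f (Metric.ball x ε) := fun z hz =>
      (hfdiff z (hball hz)).differentiableWithinAt
    have hzero : ∀ z ∈ Metric.ball x ε, fderivWithin ℝ f (Metric.ball x ε) z = 0 := by
      intro z hz
      rw [fderivWithin_of_isOpen Metric.isOpen_ball hz]
      exact hf0 z (hball hz)
    exact (convex_ball x ε).is_const_of_fderivWithin_eq_zero hdiff hzero hy
      (Metric.mem_ball_self hε)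
  obtain ⟨x₀, hx₀⟩ := hΩne
  set c : ℝ := f x₀ with hcdef
  set U : Set E := {x | x ∈ Ω ∧ f x = c} with hUdef
  set V : Set E := {x | x ∈ Ω ∧ f x ≠ c} with hVdef
  have hUopen : IsOpen U := by
    rw [Metric.isOpen_iff]
    rintro x ⟨hxΩ, hxc⟩
    obtain ⟨ε, hε, hball, hconst⟩ := hloc x hxΩ
    exact ⟨ε, hε, fun y hy => ⟨hball hy, (hconst y hy).trans hxc⟩⟩
  have hVopen : IsOpen V := by
    rw [Metric.isOpen_iff]
    rintro x ⟨hxΩ, hxc⟩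
    obtain ⟨ε, hε, hball, hconst⟩ := hloc x hxΩ
    exact ⟨ε, hε, fun y hy => ⟨hball hy, (hconst y hy).symm ▸ hxc⟩⟩
  have hdisj : Disjoint U V := by
    rw [Set.disjoint_left]
    rintro x ⟨_, hx1⟩ ⟨_, hx2⟩
    exact hx2 hx1
  have hcover : Ω ⊆ U ∪ V := fun x hx => by
    by_cases h : f x = c
    · exact Or.inl ⟨hx, h⟩
    · exact Or.inr ⟨hx, h⟩
  have hsub : Ω ⊆ U :=
    hΩc.isPreconnected.subset_left_of_subset_union hUopen hVopen hdisj hcover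
      ⟨x₀, hx₀, hx₀, rfl⟩
  refine ⟨c, ?_, ?_⟩
  · have : 0 ≤ f x₀ := mul_nonneg (hu0 x₀ hx₀) (inv_nonneg.mpr (hv0 x₀ hx₀).le)
    exact this
  · intro x hx
    have hfx : f x = c := (hsub hx).2
    have hvx : v x ≠ 0 := (hv0 x hx).ne'
    have : u x * (v x)⁻¹ = c := hfx
    field_simp at this
    linarith [this]
end

section
/- Let p, q, α, β be real numbers with p > 1, q > 1, α > 0, β > 0 and (α+1)/p + (β+1)/q = 1. Then for all real numbers a₀, b₀, a, b > 0, a₀^{α+1}·b₀^{β+1} ≤ ((α+1)/p)·a₀^p·b^{β+1}·a^{α+1−p} + ((β+1)/q)·b₀^q·a^{α+1}·b^{β+1−q}. -/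
/-- A four-variable Young-type inequality. -/
theorem young_coupling_four_variables
    (p q α β : ℝ) (hp : 1 < p) (hq : 1 < q) (hα : 0 < α) (hβ : 0 < β)
    (hpq : (α + 1) / p + (β + 1) / q = 1)
    (a₀ b₀ a b : ℝ) (ha₀ : 0 < a₀) (hb₀ : 0 < b₀) (ha : 0 < a) (hb : 0 < b) :
    a₀ ^ (α + 1) * b₀ ^ (β + 1)
      ≤ (α + 1) / p * a₀ ^ p * b ^ (β + 1) * a ^ (α + 1 - p)
        + (β + 1) / q * b₀ ^ q * a ^ (α + 1) * b ^ (β + 1 - q) := by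
  have hp0 : (0:ℝ) < p := lt_trans one_pos hp
  have hq0 : (0:ℝ) < q := lt_trans one_pos hq
  have hw1 : (0:ℝ) ≤ (α+1)/p := by positivity
  have hw2 : (0:ℝ) ≤ (β+1)/q := by positivity
  have h1 : (0:ℝ) ≤ a₀^p * b^(β+1) * a^(α+1-p) := by positivity
  have h2 : (0:ℝ) ≤ b₀^q * a^(α+1) * b^(β+1-q) := by positivity
  have key := Real.geom_mean_le_arith_mean2_weighted hw1 hw2 h1 h2 hpq
  have heq : (a₀^p * b^(β+1) * a^(α+1-p)) ^ ((α+1)/p)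
      * (b₀^q * a^(α+1) * b^(β+1-q)) ^ ((β+1)/q)
      = a₀ ^ (α+1) * b₀ ^ (β+1) := by
    rw [Real.mul_rpow (by positivity) (by positivity),
        Real.mul_rpow (by positivity) (by positivity),
        Real.mul_rpow (by positivity) (by positivity),
        Real.mul_rpow (by positivity) (by positivity),
        ← Real.rpow_mul ha₀.le, ← Real.rpow_mul hb.le, ← Real.rpow_mul ha.le,
        ← Real.rpow_mul hb₀.le, ← Real.rpow_mul ha.le, ← Real.rpow_mul hb.le]
    have ea : a ^ ((α+1-p)*((α+1)/p)) * a ^ ((α+1)*((β+1)/q)) = 1 := by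
      rw [← Real.rpow_add ha]
      have : (α+1-p)*((α+1)/p) + (α+1)*((β+1)/q) = 0 := by
        have hq' : (β+1)/q = 1 - (α+1)/p := by linarith
        rw [hq']
        field_simp
        ring
      rw [this, Real.rpow_zero]
    have eb : b ^ ((β+1)*((α+1)/p)) * b ^ ((β+1-q)*((β+1)/q)) = 1 := by
      rw [← Real.rpow_add hb]
      have : (β+1)*((α+1)/p) + (β+1-q)*((β+1)/q) = 0 := by
        have hp' : (α+1)/p = 1 - (β+1)/q := by linarith
        rw [hp']
        field_simp
        ring
      rw [this, Real.rpow_zero]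
    have ea0 : a₀ ^ (p*((α+1)/p)) = a₀ ^ (α+1) := by
      rw [mul_div_cancel₀ _ hp0.ne']
    have eb0 : b₀ ^ (q*((β+1)/q)) = b₀ ^ (β+1) := by
      rw [mul_div_cancel₀ _ hq0.ne']
    calc a₀ ^ (p*((α+1)/p)) * b ^ ((β+1)*((α+1)/p)) * a ^ ((α+1-p)*((α+1)/p))
          * (b₀ ^ (q*((β+1)/q)) * a ^ ((α+1)*((β+1)/q)) * b ^ ((β+1-q)*((β+1)/q)))
        = a₀ ^ (p*((α+1)/p)) * b₀ ^ (q*((β+1)/q))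
          * (a ^ ((α+1-p)*((α+1)/p)) * a ^ ((α+1)*((β+1)/q)))
          * (b ^ ((β+1)*((α+1)/p)) * b ^ ((β+1-q)*((β+1)/q))) := by ring
      _ = a₀ ^ (α+1) * b₀ ^ (β+1) := by rw [ea, eb, ea0, eb0]; ring
  rw [heq] at key
  calc a₀ ^ (α+1) * b₀ ^ (β+1)
      ≤ (α+1)/p * (a₀^p * b^(β+1) * a^(α+1-p)) + (β+1)/q * (b₀^q * a^(α+1) * b^(β+1-q)) := key
    _ = (α+1)/p * a₀^p * b^(β+1) * a^(α+1-p) + (β+1)/q * b₀^q * a^(α+1) * b^(β+1-q) := by ring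
end

section
/- Let p, q, α, β be real numbers with p > 1, q > 1, α > 0, β > 0 and (α+1)/p + (β+1)/q = 1. Let (Ω, μ) be a measure space, let u, v and uₙ, vₙ (n ∈ ℕ) be measurable real-valued functions on Ω with u, uₙ ∈ L^p(μ) and v, vₙ ∈ L^q(μ), and suppose ∫_Ω |uₙ − u|^p dμ → 0 and ∫_Ω |vₙ − v|^q dμ → 0 as n → ∞. Then ∫_Ω |uₙ|^{α+1}|vₙ|^{β+1} dμ → ∫_Ω |u|^{α+1}|v|^{β+1} dμ as n → ∞. -/
open MeasureTheory Filter ENNReal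


lemma two_rpow_aux (X Y : ℝ≥0∞) (p : ℝ) (hp : 0 ≤ p) :
    (X + Y) ^ p ≤ 2 ^ p * (X ^ p + Y ^ p) := by
  calc (X + Y) ^ p ≤ (2 * (X ⊔ Y)) ^ p := by
        refine ENNReal.rpow_le_rpow ?_ hp
        rw [two_mul]
        exact add_le_add le_sup_left le_sup_right
    _ = 2 ^ p * (X ⊔ Y) ^ p := ENNReal.mul_rpow_of_nonneg _ _ hp
    _ ≤ 2 ^ p * (X ^ p + Y ^ p) := by
        gcongr
        rcases le_total X Y with h | h
        · rw [sup_eq_right.2 h]; exact le_add_self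
        · rw [sup_eq_left.2 h]; exact le_self_add

lemma real_pow_ineq {a : ℝ} (ha : 1 ≤ a) {c d : ℝ} (hc : 0 ≤ c) (hd : 0 ≤ d) :
    |c ^ a - d ^ a| ≤ a * |c - d| * (c + d) ^ (a - 1) := by
  have key : ∀ c d : ℝ, 0 ≤ c → 0 ≤ d → d ≤ c →
      c ^ a - d ^ a ≤ a * (c - d) * (c + d) ^ (a - 1) := by
    intro c d hc hd hdc
    rcases eq_or_lt_of_le hc with h0 | h0
    · have : c = 0 := h0.symm
      have : d = 0 := le_antisymm (this ▸ hdc) hd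
      simp [‹c = 0›, this]
    · -- c > 0
      have ht0 : 0 ≤ d / c := div_nonneg hd h0.le
      have ht1 : d / c ≤ 1 := (div_le_one h0).2 hdc
      have hb := one_add_mul_self_le_rpow_one_add (s := d / c - 1) (by linarith) ha
      -- 1 + a * (d/c - 1) ≤ (d/c) ^ a
      rw [add_sub_cancel] at hb
      have h1 : c ^ a - d ^ a ≤ a * (c - d) * c ^ (a - 1) := by
        have hd_eq : d ^ a = c ^ a * (d / c) ^ a := by
          rw [← Real.mul_rpow h0.le ht0]
          field_simp
        have h2 : c ^ a - d ^ a ≤ c ^ a * (a * (1 - d / c)) := by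
          rw [hd_eq]
          have : 1 - (d / c) ^ a ≤ a * (1 - d / c) := by nlinarith
          calc c ^ a - c ^ a * (d / c) ^ a = c ^ a * (1 - (d / c) ^ a) := by ring
            _ ≤ c ^ a * (a * (1 - d / c)) := by
                have := Real.rpow_nonneg h0.le a
                nlinarith
        have h3 : c ^ a * (a * (1 - d / c)) = a * (c - d) * c ^ (a - 1) := by
          have : c ^ a = c ^ (a - 1) * c := by
            rw [← Real.rpow_add_one h0.ne' (a - 1), sub_add_cancel]
          rw [this]
          field_simp
        linarith
      refine h1.trans ?_
      have hnn : 0 ≤ a * (c - d) := mul_nonneg (by linarith) (by linarith)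
      exact mul_le_mul_of_nonneg_left
        (Real.rpow_le_rpow h0.le (by linarith) (by linarith)) hnn
  rcases le_total d c with h | h
  · rw [abs_of_nonneg (sub_nonneg.2 (Real.rpow_le_rpow hd h (by linarith))),
      abs_of_nonneg (sub_nonneg.2 h)]
    exact key c d hc hd h
  · rw [abs_sub_comm, abs_sub_comm c d,
      abs_of_nonneg (sub_nonneg.2 (Real.rpow_le_rpow hc h (by linarith))),
      abs_of_nonneg (sub_nonneg.2 h), add_comm c d]
    exact key d c hd hc h

lemma keyP {Ω : Type*} [MeasurableSpace Ω] {μ : Measure Ω}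
    {p a : ℝ} (ha : 1 < a) (hap : a < p)
    {u : Ω → ℝ} {un : ℕ → Ω → ℝ} (hu : Measurable u) (hun : ∀ n, Measurable (un n))
    (hufin : ∫⁻ x, (ENNReal.ofReal |u x|) ^ p ∂μ ≠ ⊤)
    (hconv : Tendsto (fun n => ∫⁻ x, (ENNReal.ofReal |un n x - u x|) ^ p ∂μ) atTop (nhds 0)) :
    Tendsto (fun n => ∫⁻ x, (ENNReal.ofReal ((|(|un n x| ^ a - |u x| ^ a)|))) ^ (p / a) ∂μ)
      atTop (nhds 0) := by
  have hp1 : 1 < p := ha.trans hap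
  have hp0 : 0 < p := by linarith
  have ha0 : 0 < a := by linarith
  have hr0 : 0 < p / a := div_pos hp0 ha0
  set r : ℝ := p / a with hr_def
  have hra : r * a = p := div_mul_cancel₀ p ha0.ne'
  have haconj : Real.HolderConjugate a (a / (a - 1)) :=
    (Real.holderConjugate_iff_eq_conjExponent ha).2 rfl
  set C : ℝ≥0∞ := ENNReal.ofReal a ^ r with hC_def
  have hC_ne : C ≠ ⊤ := ENNReal.rpow_ne_top_of_nonneg hr0.le ENNReal.ofReal_ne_top
  set Mu : ℝ≥0∞ := ∫⁻ x, (ENNReal.ofReal |u x|) ^ p ∂μ with hMu_def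
  set A : ℕ → ℝ≥0∞ := fun n => ∫⁻ x, (ENNReal.ofReal |un n x - u x|) ^ p ∂μ with hA_def
  -- step 1: pointwise bound and Hölder
  have step : ∀ n, (∫⁻ x, (ENNReal.ofReal ((|(|un n x| ^ a - |u x| ^ a)|))) ^ r ∂μ)
      ≤ C * (A n) ^ (1 / a) *
        ((∫⁻ x, (ENNReal.ofReal (|un n x| + |u x|)) ^ p ∂μ) ^ (1 / (a / (a - 1)))) := by
    intro n
    have hmeas1 : AEMeasurable (fun x => (ENNReal.ofReal |un n x - u x|) ^ r) μ :=
      (((hun n).sub hu).abs.ennreal_ofReal.pow_const r).aemeasurable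
    have hmeas2 : AEMeasurable
        (fun x => (ENNReal.ofReal (|un n x| + |u x|)) ^ ((a - 1) * r)) μ :=
      (((hun n).abs.add hu.abs).ennreal_ofReal.pow_const _).aemeasurable
    calc ∫⁻ x, (ENNReal.ofReal ((|(|un n x| ^ a - |u x| ^ a)|))) ^ r ∂μ
        ≤ ∫⁻ x, C * ((ENNReal.ofReal |un n x - u x|) ^ r *
            (ENNReal.ofReal (|un n x| + |u x|)) ^ ((a - 1) * r)) ∂μ := by
          refine lintegral_mono fun x => ?_
          have hb := real_pow_ineq ha.le (abs_nonneg (un n x)) (abs_nonneg (u x))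
          have hb2 : ENNReal.ofReal ((|(|un n x| ^ a - |u x| ^ a)|))
              ≤ ENNReal.ofReal a * ENNReal.ofReal (|(|un n x| - |u x|)|) *
                (ENNReal.ofReal (|un n x| + |u x|)) ^ (a - 1) := by
            refine le_trans (ENNReal.ofReal_le_ofReal hb) ?_
            rw [ENNReal.ofReal_mul (by positivity), ENNReal.ofReal_mul (by linarith [ha0]),
              ENNReal.ofReal_rpow_of_nonneg (by positivity) (by linarith)]
          calc (ENNReal.ofReal ((|(|un n x| ^ a - |u x| ^ a)|))) ^ r
              ≤ (ENNReal.ofReal a * ENNReal.ofReal (|(|un n x| - |u x|)|) *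
                  (ENNReal.ofReal (|un n x| + |u x|)) ^ (a - 1)) ^ r :=
                ENNReal.rpow_le_rpow hb2 hr0.le
            _ = C * ((ENNReal.ofReal (|(|un n x| - |u x|)|)) ^ r *
                  (ENNReal.ofReal (|un n x| + |u x|)) ^ ((a - 1) * r)) := by
                rw [ENNReal.mul_rpow_of_nonneg _ _ hr0.le,
                  ENNReal.mul_rpow_of_nonneg _ _ hr0.le, ← ENNReal.rpow_mul]
                ring
            _ ≤ C * ((ENNReal.ofReal |un n x - u x|) ^ r *
                  (ENNReal.ofReal (|un n x| + |u x|)) ^ ((a - 1) * r)) := by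
                exact mul_le_mul_right (mul_le_mul_left
                  (ENNReal.rpow_le_rpow (ENNReal.ofReal_le_ofReal
                    (abs_abs_sub_abs_le_abs_sub _ _)) hr0.le) _) _
      _ = C * ∫⁻ x, (ENNReal.ofReal |un n x - u x|) ^ r *
            (ENNReal.ofReal (|un n x| + |u x|)) ^ ((a - 1) * r) ∂μ :=
          lintegral_const_mul' _ _ hC_ne
      _ ≤ C * ((∫⁻ x, ((ENNReal.ofReal |un n x - u x|) ^ r) ^ a ∂μ) ^ (1 / a) *
            (∫⁻ x, ((ENNReal.ofReal (|un n x| + |u x|)) ^ ((a - 1) * r)) ^ (a / (a - 1)) ∂μ)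
              ^ (1 / (a / (a - 1)))) := by
          gcongr
          exact ENNReal.lintegral_mul_le_Lp_mul_Lq μ haconj hmeas1 hmeas2
      _ = C * (A n) ^ (1 / a) *
            ((∫⁻ x, (ENNReal.ofReal (|un n x| + |u x|)) ^ p ∂μ) ^ (1 / (a / (a - 1)))) := by
          have e1 : ∀ X : ℝ≥0∞, (X ^ r) ^ a = X ^ p := fun X => by
            rw [← ENNReal.rpow_mul, hra]
          have e2 : ∀ X : ℝ≥0∞, (X ^ ((a - 1) * r)) ^ (a / (a - 1)) = X ^ p := fun X => by
            rw [← ENNReal.rpow_mul]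
            congr 1
            have ha1 : a - 1 ≠ 0 := by linarith
            rw [hr_def]
            field_simp
          simp only [e1, e2, hA_def]
          ring
  -- step 2: bound the second factor eventually
  have hAev : ∀ᶠ n in atTop, A n < 1 := hconv.eventually (gt_mem_nhds (by norm_num))
  have h2p : (2:ℝ≥0∞) ^ p ≠ ⊤ :=
    ENNReal.rpow_ne_top_of_nonneg hp0.le (by norm_num)
  have hBn : ∀ n, (∫⁻ x, (ENNReal.ofReal (|un n x| + |u x|)) ^ p ∂μ)
      ≤ 2 ^ p * (2 ^ p * (A n + Mu) + Mu) := by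
    intro n
    have pt : ∀ x, (ENNReal.ofReal (|un n x| + |u x|)) ^ p
        ≤ 2 ^ p * (2 ^ p * ((ENNReal.ofReal |un n x - u x|) ^ p
            + (ENNReal.ofReal (|u x|)) ^ p) + (ENNReal.ofReal (|u x|)) ^ p) := by
      intro x
      have h1 : ENNReal.ofReal (|un n x| + |u x|)
          = ENNReal.ofReal (|un n x|) + ENNReal.ofReal (|u x|) :=
        ENNReal.ofReal_add (abs_nonneg _) (abs_nonneg _)
      have h2 : ENNReal.ofReal (|un n x|)
          ≤ ENNReal.ofReal (|un n x - u x|) + ENNReal.ofReal (|u x|) := by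
        rw [← ENNReal.ofReal_add (abs_nonneg _) (abs_nonneg _)]
        exact ENNReal.ofReal_le_ofReal (by
          have := abs_sub_abs_le_abs_sub (un n x) (u x); linarith [abs_nonneg (un n x - u x), abs_sub (un n x) (u x)] )
      calc (ENNReal.ofReal (|un n x| + |u x|)) ^ p
          ≤ (ENNReal.ofReal (|un n x|) ^ p + ENNReal.ofReal (|u x|) ^ p) * 2 ^ p := by
            rw [h1, mul_comm]; exact two_rpow_aux _ _ p hp0.le
        _ ≤ ((2:ℝ≥0∞) ^ p * ((ENNReal.ofReal |un n x - u x|) ^ p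
              + (ENNReal.ofReal (|u x|)) ^ p) + (ENNReal.ofReal (|u x|)) ^ p) * 2 ^ p := by
            gcongr
            exact le_trans (ENNReal.rpow_le_rpow h2 hp0.le) (two_rpow_aux _ _ p hp0.le)
        _ = 2 ^ p * (2 ^ p * ((ENNReal.ofReal |un n x - u x|) ^ p
              + (ENNReal.ofReal (|u x|)) ^ p) + (ENNReal.ofReal (|u x|)) ^ p) := by ring
    calc (∫⁻ x, (ENNReal.ofReal (|un n x| + |u x|)) ^ p ∂μ)
        ≤ ∫⁻ x, 2 ^ p * (2 ^ p * ((ENNReal.ofReal |un n x - u x|) ^ p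
            + (ENNReal.ofReal (|u x|)) ^ p) + (ENNReal.ofReal (|u x|)) ^ p) ∂μ :=
          lintegral_mono pt
      _ = 2 ^ p * (2 ^ p * (A n + Mu) + Mu) := by
          rw [lintegral_const_mul' _ _ h2p]
          congr 1
          rw [lintegral_add_right _ (hu.abs.ennreal_ofReal.pow_const p)]
          congr 1
          rw [lintegral_const_mul' _ _ h2p]
          congr 1
          exact lintegral_add_right _ (hu.abs.ennreal_ofReal.pow_const p)
  set K : ℝ≥0∞ := 2 ^ p * (2 ^ p * (1 + Mu) + Mu) with hK_def
  have hK_ne : K ≠ ⊤ := by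
    exact ENNReal.mul_ne_top h2p (ENNReal.add_ne_top.2
      ⟨ENNReal.mul_ne_top h2p (ENNReal.add_ne_top.2 ⟨one_ne_top, hufin⟩), hufin⟩)
  -- step 3: squeeze
  have hbound : ∀ᶠ n in atTop,
      (∫⁻ x, (ENNReal.ofReal ((|(|un n x| ^ a - |u x| ^ a)|))) ^ r ∂μ)
        ≤ C * (A n) ^ (1 / a) * K ^ (1 / (a / (a - 1))) := by
    filter_upwards [hAev] with n hAn
    refine (step n).trans ?_
    refine mul_le_mul_right (ENNReal.rpow_le_rpow ((hBn n).trans ?_)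
      (one_div_nonneg.2 (div_nonneg ha0.le (by linarith)))) _
    rw [hK_def]
    exact mul_le_mul_right (add_le_add_left (mul_le_mul_right
      (add_le_add_left hAn.le _) _) _) _
  have hlim : Tendsto (fun n => C * (A n) ^ (1 / a) * K ^ (1 / (a / (a - 1)))) atTop (nhds 0) := by
    have h1 : Tendsto (fun n => (A n) ^ (1 / a)) atTop (nhds 0) := by
      have := ((ENNReal.continuous_rpow_const (y := 1 / a)).tendsto 0).comp hconv
      have h0 : (0:ℝ≥0∞) ^ (1 / a) = 0 := ENNReal.zero_rpow_of_pos (by positivity)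
      rw [show (0:ℝ≥0∞) = (0:ℝ≥0∞) ^ (1 / a) from h0.symm]
      exact this
    have h2 : Tendsto (fun n => C * (A n) ^ (1 / a)) atTop (nhds 0) := by
      simpa using ENNReal.Tendsto.const_mul h1 (Or.inr hC_ne)
    simpa using ENNReal.Tendsto.mul_const h2
      (Or.inr (ENNReal.rpow_ne_top_of_nonneg
        (one_div_nonneg.2 (div_nonneg ha0.le (by linarith))) hK_ne))
  exact tendsto_of_tendsto_of_tendsto_of_le_of_le' tendsto_const_nhds hlim
    (Eventually.of_forall fun n => zero_le) hbound

/-- Continuity of the coupling functional `Ψ(u,v) = ∫ |u|^(α+1) |v|^(β+1) dμ`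
with respect to `L^p` convergence in the first argument and `L^q` convergence in
the second. -/
theorem coupling_continuity
    (p q α β : ℝ) (hp : 1 < p) (hq : 1 < q) (hα : 0 < α) (hβ : 0 < β)
    (hpq : (α + 1) / p + (β + 1) / q = 1)
    {Ω : Type*} [MeasurableSpace Ω] (μ : Measure Ω)
    (u v : Ω → ℝ) (un vn : ℕ → Ω → ℝ)
    (hu : Measurable u) (hv : Measurable v)
    (hun : ∀ n, Measurable (un n)) (hvn : ∀ n, Measurable (vn n))
    (hup : Integrable (fun x => |u x| ^ p) μ)
    (hvq : Integrable (fun x => |v x| ^ q) μ)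
    (hunp : ∀ n, Integrable (fun x => |un n x| ^ p) μ)
    (hvnq : ∀ n, Integrable (fun x => |vn n x| ^ q) μ)
    (hconvu : Tendsto (fun n => ∫ x, |un n x - u x| ^ p ∂μ) atTop (nhds 0))
    (hconvv : Tendsto (fun n => ∫ x, |vn n x - v x| ^ q ∂μ) atTop (nhds 0)) :
    Tendsto (fun n => ∫ x, |un n x| ^ (α + 1) * |vn n x| ^ (β + 1) ∂μ) atTop
      (nhds (∫ x, |u x| ^ (α + 1) * |v x| ^ (β + 1) ∂μ)) := by
  have mrpow : ∀ (f : Ω → ℝ), Measurable f → ∀ (c : ℝ), 0 ≤ c →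
      Measurable (fun x => |f x| ^ c) := fun f hf c hc =>
    (Real.continuous_rpow_const hc).measurable.comp hf.abs
  set a : ℝ := α + 1 with ha_def
  set b : ℝ := β + 1 with hb_def
  have hp0 : 0 < p := by linarith
  have hq0 : 0 < q := by linarith
  have ha1 : 1 < a := by simp [ha_def]; linarith
  have hb1 : 1 < b := by simp [hb_def]; linarith
  have hap : a < p := by
    have hbq0 : 0 < b / q := div_pos (by linarith) hq0
    have : a / p < 1 := by linarith
    calc a = (a / p) * p := by field_simp
      _ < 1 * p := by exact mul_lt_mul_of_pos_right this hp0
      _ = p := one_mul p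
  have hbq : b < q := by
    have hap0 : 0 < a / p := div_pos (by linarith) hp0
    have : b / q < 1 := by linarith
    calc b = (b / q) * q := by field_simp
      _ < 1 * q := by exact mul_lt_mul_of_pos_right this hq0
      _ = q := one_mul q
  have ha0 : 0 < a := by linarith
  have hb0 : 0 < b := by linarith
  set r : ℝ := p / a with hr_def
  set s : ℝ := q / b with hs_def
  have hr1 : 1 < r := (one_lt_div ha0).2 hap
  have hs1 : 1 < s := (one_lt_div hb0).2 hbq
  have hrs : Real.HolderConjugate r s := by
    refine ⟨?_, by linarith, by linarith⟩
    rw [hr_def, hs_def, inv_div, inv_div, inv_one]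
    exact hpq
  have hra : r⁻¹ * p = a := by rw [hr_def]; field_simp
  have har : a * r = p := by rw [hr_def]; field_simp
  have hbs : b * s = q := by rw [hs_def]; field_simp
  -- lintegral quantities
  set Mu : ℝ≥0∞ := ∫⁻ x, (ENNReal.ofReal |u x|) ^ p ∂μ with hMu_def
  set Mv : ℝ≥0∞ := ∫⁻ x, (ENNReal.ofReal |v x|) ^ q ∂μ with hMv_def
  set Lu : ℕ → ℝ≥0∞ := fun n => ∫⁻ x, (ENNReal.ofReal |un n x|) ^ p ∂μ with hLu_def
  set Lv : ℕ → ℝ≥0∞ := fun n => ∫⁻ x, (ENNReal.ofReal |vn n x|) ^ q ∂μ with hLv_def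
  -- finiteness from integrability
  have lint_eq : ∀ (f : Ω → ℝ) (t : ℝ), 0 < t → Integrable (fun x => |f x| ^ t) μ →
      (∫⁻ x, (ENNReal.ofReal |f x|) ^ t ∂μ) = ENNReal.ofReal (∫ x, |f x| ^ t ∂μ) := by
    intro f t ht hi
    rw [MeasureTheory.ofReal_integral_eq_lintegral_ofReal hi
      (Eventually.of_forall fun x => by positivity)]
    exact lintegral_congr fun x =>
      ENNReal.ofReal_rpow_of_nonneg (abs_nonneg _) ht.le
  have hMu_ne : Mu ≠ ⊤ := by
    rw [hMu_def, lint_eq u p hp0 hup]; exact ENNReal.ofReal_ne_top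
  have hMv_ne : Mv ≠ ⊤ := by
    rw [hMv_def, lint_eq v q hq0 hvq]; exact ENNReal.ofReal_ne_top
  have hLu_ne : ∀ n, Lu n ≠ ⊤ := fun n => by
    rw [hLu_def]; simp only; rw [lint_eq (un n) p hp0 (hunp n)]; exact ENNReal.ofReal_ne_top
  have hLv_ne : ∀ n, Lv n ≠ ⊤ := fun n => by
    rw [hLv_def]; simp only; rw [lint_eq (vn n) q hq0 (hvnq n)]; exact ENNReal.ofReal_ne_top
  have h2p : (2:ℝ≥0∞) ^ p ≠ ⊤ := ENNReal.rpow_ne_top_of_nonneg hp0.le (by norm_num)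
  have h2q : (2:ℝ≥0∞) ^ q ≠ ⊤ := ENNReal.rpow_ne_top_of_nonneg hq0.le (by norm_num)
  -- pointwise triangle comparison
  have tri : ∀ (c d : ℝ) (t : ℝ), 0 ≤ t → (ENNReal.ofReal |c - d|) ^ t
      ≤ 2 ^ t * ((ENNReal.ofReal |c|) ^ t + (ENNReal.ofReal |d|) ^ t) := by
    intro c d t ht
    refine le_trans (ENNReal.rpow_le_rpow ?_ ht) (two_rpow_aux _ _ t ht)
    rw [← ENNReal.ofReal_add (abs_nonneg _) (abs_nonneg _)]
    exact ENNReal.ofReal_le_ofReal (abs_sub _ _)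
  -- difference lintegrals
  set Du : ℕ → ℝ≥0∞ := fun n => ∫⁻ x, (ENNReal.ofReal |un n x - u x|) ^ p ∂μ with hDu_def
  set Dv : ℕ → ℝ≥0∞ := fun n => ∫⁻ x, (ENNReal.ofReal |vn n x - v x|) ^ q ∂μ with hDv_def
  have hDu_ne : ∀ n, Du n ≠ ⊤ := by
    intro n
    have : Du n ≤ 2 ^ p * (Lu n + Mu) := by
      rw [hDu_def]
      simp only
      calc ∫⁻ x, (ENNReal.ofReal |un n x - u x|) ^ p ∂μ
          ≤ ∫⁻ x, 2 ^ p * ((ENNReal.ofReal |un n x|) ^ p + (ENNReal.ofReal |u x|) ^ p) ∂μ :=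
            lintegral_mono fun x => tri _ _ p hp0.le
        _ = 2 ^ p * (Lu n + Mu) := by
            rw [lintegral_const_mul' _ _ h2p,
              lintegral_add_right _ (hu.abs.ennreal_ofReal.pow_const p)]
    exact ne_top_of_le_ne_top
      (ENNReal.mul_ne_top h2p (ENNReal.add_ne_top.2 ⟨hLu_ne n, hMu_ne⟩)) this
  have hDv_ne : ∀ n, Dv n ≠ ⊤ := by
    intro n
    have : Dv n ≤ 2 ^ q * (Lv n + Mv) := by
      rw [hDv_def]
      simp only
      calc ∫⁻ x, (ENNReal.ofReal |vn n x - v x|) ^ q ∂μ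
          ≤ ∫⁻ x, 2 ^ q * ((ENNReal.ofReal |vn n x|) ^ q + (ENNReal.ofReal |v x|) ^ q) ∂μ :=
            lintegral_mono fun x => tri _ _ q hq0.le
        _ = 2 ^ q * (Lv n + Mv) := by
            rw [lintegral_const_mul' _ _ h2q,
              lintegral_add_right _ (hv.abs.ennreal_ofReal.pow_const q)]
    exact ne_top_of_le_ne_top
      (ENNReal.mul_ne_top h2q (ENNReal.add_ne_top.2 ⟨hLv_ne n, hMv_ne⟩)) this
  -- transfer of convergence to lintegral form
  have conv_transfer : ∀ (w : Ω → ℝ) (wn : ℕ → Ω → ℝ) (t : ℝ), 0 < t →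
      Measurable w → (∀ n, Measurable (wn n)) →
      (∀ n, (∫⁻ x, (ENNReal.ofReal |wn n x - w x|) ^ t ∂μ) ≠ ⊤) →
      Tendsto (fun n => ∫ x, |wn n x - w x| ^ t ∂μ) atTop (nhds 0) →
      Tendsto (fun n => ∫⁻ x, (ENNReal.ofReal |wn n x - w x|) ^ t ∂μ) atTop (nhds 0) := by
    intro w wn t ht hw hwn hfin hcv
    have heq : ∀ n, ∫ x, |wn n x - w x| ^ t ∂μ
        = (∫⁻ x, (ENNReal.ofReal |wn n x - w x|) ^ t ∂μ).toReal := by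
      intro n
      rw [MeasureTheory.integral_eq_lintegral_of_nonneg_ae (f := fun x => |wn n x - w x| ^ t)
        (Eventually.of_forall fun x => by positivity)
        ((mrpow _ ((hwn n).sub hw) t ht.le).aestronglyMeasurable)]
      congr 1
      exact lintegral_congr fun x =>
        (ENNReal.ofReal_rpow_of_nonneg (abs_nonneg _) ht.le).symm
    have := ENNReal.tendsto_ofReal hcv
    rw [ENNReal.ofReal_zero] at this
    refine Tendsto.congr (fun n => ?_) this
    rw [heq n, ENNReal.ofReal_toReal (hfin n)]
  have hconvu' := conv_transfer u un p hp0 hu hun hDu_ne hconvu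
  have hconvv' := conv_transfer v vn q hq0 hv hvn hDv_ne hconvv
  -- key power continuity
  have hKu := keyP ha1 hap hu hun hMu_ne hconvu'
  have hKv := keyP hb1 hbq hv hvn hMv_ne hconvv'
  rw [← hr_def] at hKu
  rw [← hs_def] at hKv
  set X : ℕ → ℝ≥0∞ :=
    fun n => ∫⁻ x, (ENNReal.ofReal (|(|un n x| ^ a - |u x| ^ a)|)) ^ r ∂μ with hX_def
  set Y : ℕ → ℝ≥0∞ :=
    fun n => ∫⁻ x, (ENNReal.ofReal (|(|vn n x| ^ b - |v x| ^ b)|)) ^ s ∂μ with hY_def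
  -- integrability of products
  have hint : ∀ (f g : Ω → ℝ), Measurable f → Measurable g →
      (∫⁻ x, (ENNReal.ofReal |f x|) ^ p ∂μ) ≠ ⊤ →
      (∫⁻ x, (ENNReal.ofReal |g x|) ^ q ∂μ) ≠ ⊤ →
      Integrable (fun x => |f x| ^ a * |g x| ^ b) μ := by
    intro f g hf hg hfp hgq
    refine ⟨((mrpow f hf a ha0.le).mul (mrpow g hg b hb0.le)).aestronglyMeasurable, ?_⟩
    have hmeasF : AEMeasurable (fun x => (ENNReal.ofReal |f x|) ^ a) μ :=
      (hf.abs.ennreal_ofReal.pow_const a).aemeasurable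
    have hmeasG : AEMeasurable (fun x => (ENNReal.ofReal |g x|) ^ b) μ :=
      (hg.abs.ennreal_ofReal.pow_const b).aemeasurable
    have heq : ∀ x, (↑‖|f x| ^ a * |g x| ^ b‖₊ : ℝ≥0∞)
        = (ENNReal.ofReal |f x|) ^ a * (ENNReal.ofReal |g x|) ^ b := by
      intro x
      rw [← enorm_eq_nnnorm, Real.enorm_eq_ofReal_abs, abs_of_nonneg (by positivity),
        ENNReal.ofReal_mul (by positivity),
        ← ENNReal.ofReal_rpow_of_nonneg (abs_nonneg _) ha0.le,
        ← ENNReal.ofReal_rpow_of_nonneg (abs_nonneg _) hb0.le]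
    have key : ∫⁻ x, ‖|f x| ^ a * |g x| ^ b‖₊ ∂μ
        ≤ (∫⁻ x, (ENNReal.ofReal |f x|) ^ p ∂μ) ^ (1 / r) *
          (∫⁻ x, (ENNReal.ofReal |g x|) ^ q ∂μ) ^ (1 / s) := by
      calc ∫⁻ x, ‖|f x| ^ a * |g x| ^ b‖₊ ∂μ
          = ∫⁻ x, (ENNReal.ofReal |f x|) ^ a * (ENNReal.ofReal |g x|) ^ b ∂μ :=
            lintegral_congr heq
        _ ≤ (∫⁻ x, ((ENNReal.ofReal |f x|) ^ a) ^ r ∂μ) ^ (1 / r) *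
            (∫⁻ x, ((ENNReal.ofReal |g x|) ^ b) ^ s ∂μ) ^ (1 / s) :=
            ENNReal.lintegral_mul_le_Lp_mul_Lq μ hrs hmeasF hmeasG
        _ = (∫⁻ x, (ENNReal.ofReal |f x|) ^ p ∂μ) ^ (1 / r) *
            (∫⁻ x, (ENNReal.ofReal |g x|) ^ q ∂μ) ^ (1 / s) := by
            congr 1
            · congr 1
              exact lintegral_congr fun x => by rw [← ENNReal.rpow_mul, har]
            · congr 1
              exact lintegral_congr fun x => by rw [← ENNReal.rpow_mul, hbs]
    refine lt_of_le_of_lt key ?_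
    exact ENNReal.mul_lt_top
      (ENNReal.rpow_ne_top_of_nonneg (by positivity) hfp).lt_top
      (ENNReal.rpow_ne_top_of_nonneg (by positivity) hgq).lt_top
  have hfi : Integrable (fun x => |u x| ^ a * |v x| ^ b) μ := hint u v hu hv hMu_ne hMv_ne
  have hFi : ∀ n, Integrable (fun x => |un n x| ^ a * |vn n x| ^ b) μ :=
    fun n => hint (un n) (vn n) (hun n) (hvn n) (hLu_ne n) (hLv_ne n)
  refine tendsto_integral_of_L1 _ hfi.aestronglyMeasurable (Eventually.of_forall hFi) ?_
  -- pointwise bound on the difference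
  have ptw : ∀ n x, (↑‖|un n x| ^ a * |vn n x| ^ b - |u x| ^ a * |v x| ^ b‖₊ : ℝ≥0∞)
      ≤ ENNReal.ofReal (|(|un n x| ^ a - |u x| ^ a)|) * (ENNReal.ofReal |vn n x|) ^ b
        + (ENNReal.ofReal |u x|) ^ a * ENNReal.ofReal (|(|vn n x| ^ b - |v x| ^ b)|) := by
    intro n x
    rw [← enorm_eq_nnnorm, Real.enorm_eq_ofReal_abs]
    have hreal : |(|un n x| ^ a * |vn n x| ^ b - |u x| ^ a * |v x| ^ b)|
        ≤ |(|un n x| ^ a - |u x| ^ a)| * |vn n x| ^ b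
          + |u x| ^ a * |(|vn n x| ^ b - |v x| ^ b)| := by
      have expand : |un n x| ^ a * |vn n x| ^ b - |u x| ^ a * |v x| ^ b
          = (|un n x| ^ a - |u x| ^ a) * |vn n x| ^ b
            + |u x| ^ a * (|vn n x| ^ b - |v x| ^ b) := by ring
      rw [expand]
      refine (abs_add_le _ _).trans ?_
      rw [abs_mul, abs_mul, abs_of_nonneg (by positivity : (0:ℝ) ≤ |vn n x| ^ b),
        abs_of_nonneg (by positivity : (0:ℝ) ≤ |u x| ^ a)]
    refine le_trans (ENNReal.ofReal_le_ofReal hreal) ?_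
    rw [ENNReal.ofReal_add (by positivity) (by positivity),
      ENNReal.ofReal_mul (abs_nonneg _), ENNReal.ofReal_mul (by positivity),
      ← ENNReal.ofReal_rpow_of_nonneg (abs_nonneg _) hb0.le,
      ← ENNReal.ofReal_rpow_of_nonneg (abs_nonneg _) ha0.le]
  -- main integral bound
  have hmeas_du : ∀ n, Measurable (fun x => ENNReal.ofReal (|(|un n x| ^ a - |u x| ^ a)|)) :=
    fun n => ((mrpow (un n) (hun n) a ha0.le).sub (mrpow u hu a ha0.le)).abs.ennreal_ofReal
  have hmeas_dv : ∀ n, Measurable (fun x => ENNReal.ofReal (|(|vn n x| ^ b - |v x| ^ b)|)) :=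
    fun n => ((mrpow (vn n) (hvn n) b hb0.le).sub (mrpow v hv b hb0.le)).abs.ennreal_ofReal
  have main : ∀ n, (∫⁻ x, ‖|un n x| ^ a * |vn n x| ^ b - |u x| ^ a * |v x| ^ b‖₊ ∂μ)
      ≤ (X n) ^ (1 / r) * (Lv n) ^ (1 / s) + Mu ^ (1 / r) * (Y n) ^ (1 / s) := by
    intro n
    have holder1 : ∫⁻ x, ENNReal.ofReal (|(|un n x| ^ a - |u x| ^ a)|)
          * (ENNReal.ofReal |vn n x|) ^ b ∂μ
        ≤ (X n) ^ (1 / r) * (Lv n) ^ (1 / s) := by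
      refine le_trans (ENNReal.lintegral_mul_le_Lp_mul_Lq μ hrs (hmeas_du n).aemeasurable
        ((hvn n).abs.ennreal_ofReal.pow_const b).aemeasurable) ?_
      apply le_of_eq
      congr 1
      congr 1
      exact lintegral_congr fun x => by rw [← ENNReal.rpow_mul, hbs]
    have holder2 : ∫⁻ x, (ENNReal.ofReal |u x|) ^ a
          * ENNReal.ofReal (|(|vn n x| ^ b - |v x| ^ b)|) ∂μ
        ≤ Mu ^ (1 / r) * (Y n) ^ (1 / s) := by
      refine le_trans (ENNReal.lintegral_mul_le_Lp_mul_Lq μ hrs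
        (hu.abs.ennreal_ofReal.pow_const a).aemeasurable (hmeas_dv n).aemeasurable) ?_
      apply le_of_eq
      congr 2
      exact lintegral_congr fun x => by rw [← ENNReal.rpow_mul, har]
    calc (∫⁻ x, ‖|un n x| ^ a * |vn n x| ^ b - |u x| ^ a * |v x| ^ b‖₊ ∂μ)
        ≤ ∫⁻ x, (ENNReal.ofReal (|(|un n x| ^ a - |u x| ^ a)|)
            * (ENNReal.ofReal |vn n x|) ^ b
            + (ENNReal.ofReal |u x|) ^ a
            * ENNReal.ofReal (|(|vn n x| ^ b - |v x| ^ b)|)) ∂μ :=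
          lintegral_mono (ptw n)
      _ = (∫⁻ x, ENNReal.ofReal (|(|un n x| ^ a - |u x| ^ a)|)
            * (ENNReal.ofReal |vn n x|) ^ b ∂μ)
          + ∫⁻ x, (ENNReal.ofReal |u x|) ^ a
            * ENNReal.ofReal (|(|vn n x| ^ b - |v x| ^ b)|) ∂μ :=
          lintegral_add_left ((hmeas_du n).mul ((hvn n).abs.ennreal_ofReal.pow_const b)) _
      _ ≤ _ := add_le_add holder1 holder2
  -- bound Lv n
  have hLvD : ∀ n, Lv n ≤ 2 ^ q * (Dv n + Mv) := by
    intro n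
    have pt : ∀ x, (ENNReal.ofReal |vn n x|) ^ q
        ≤ 2 ^ q * ((ENNReal.ofReal |vn n x - v x|) ^ q + (ENNReal.ofReal |v x|) ^ q) := by
      intro x
      refine le_trans (ENNReal.rpow_le_rpow ?_ hq0.le) (two_rpow_aux _ _ q hq0.le)
      rw [← ENNReal.ofReal_add (abs_nonneg _) (abs_nonneg _)]
      refine ENNReal.ofReal_le_ofReal ?_
      have := abs_sub_abs_le_abs_sub (vn n x) (v x)
      linarith [abs_nonneg (vn n x - v x)]
    calc Lv n ≤ ∫⁻ x, 2 ^ q * ((ENNReal.ofReal |vn n x - v x|) ^ q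
          + (ENNReal.ofReal |v x|) ^ q) ∂μ := lintegral_mono pt
      _ = 2 ^ q * (Dv n + Mv) := by
          rw [lintegral_const_mul' _ _ h2q,
            lintegral_add_right _ (hv.abs.ennreal_ofReal.pow_const q)]
  have main' : ∀ n, (∫⁻ x, ‖|un n x| ^ a * |vn n x| ^ b - |u x| ^ a * |v x| ^ b‖₊ ∂μ)
      ≤ (X n) ^ (1 / r) * (2 ^ q * (Dv n + Mv)) ^ (1 / s) + Mu ^ (1 / r) * (Y n) ^ (1 / s) := by
    intro n
    refine (main n).trans (add_le_add_left (mul_le_mul_right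
      (ENNReal.rpow_le_rpow (hLvD n) (by positivity)) _) _)
  -- limit of the bound
  have t1 : Tendsto (fun n => 2 ^ q * (Dv n + Mv)) atTop (nhds (2 ^ q * Mv)) := by
    have hadd : Tendsto (fun n => Dv n + Mv) atTop (nhds Mv) := by
      simpa using hconvv'.add (tendsto_const_nhds (x := Mv))
    exact ENNReal.Tendsto.const_mul hadd (Or.inr h2q)
  have t2 : Tendsto (fun n => (2 ^ q * (Dv n + Mv)) ^ (1 / s)) atTop
      (nhds ((2 ^ q * Mv) ^ (1 / s))) :=
    ((ENNReal.continuous_rpow_const (y := 1 / s)).tendsto _).comp t1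
  have t3 : Tendsto (fun n => (X n) ^ (1 / r)) atTop (nhds 0) := by
    have := ((ENNReal.continuous_rpow_const (y := 1 / r)).tendsto 0).comp hKu
    have h0 : (0 : ℝ≥0∞) ^ (1 / r) = 0 := ENNReal.zero_rpow_of_pos (by positivity)
    rw [show (0:ℝ≥0∞) = (0:ℝ≥0∞) ^ (1 / r) from h0.symm]
    exact this
  have t4 : Tendsto (fun n => (Y n) ^ (1 / s)) atTop (nhds 0) := by
    have := ((ENNReal.continuous_rpow_const (y := 1 / s)).tendsto 0).comp hKv
    have h0 : (0 : ℝ≥0∞) ^ (1 / s) = 0 := ENNReal.zero_rpow_of_pos (by positivity)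
    rw [show (0:ℝ≥0∞) = (0:ℝ≥0∞) ^ (1 / s) from h0.symm]
    exact this
  have hfin1 : ((2:ℝ≥0∞) ^ q * Mv) ^ (1 / s) ≠ ⊤ :=
    ENNReal.rpow_ne_top_of_nonneg (by positivity)
      (ENNReal.mul_ne_top h2q hMv_ne)
  have hfin2 : Mu ^ (1 / r) ≠ ⊤ :=
    ENNReal.rpow_ne_top_of_nonneg (by positivity) hMu_ne
  have t5 : Tendsto (fun n => (X n) ^ (1 / r) * (2 ^ q * (Dv n + Mv)) ^ (1 / s)
      + Mu ^ (1 / r) * (Y n) ^ (1 / s)) atTop (nhds 0) := by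
    have l1 := ENNReal.Tendsto.mul t3 (Or.inr hfin1) t2 (Or.inr ENNReal.zero_ne_top)
    have l2 := ENNReal.Tendsto.const_mul t4 (Or.inr hfin2)
    simpa using l1.add l2
  exact tendsto_of_tendsto_of_tendsto_of_le_of_le tendsto_const_nhds t5
    (fun n => zero_le) main'
end

section
/- Let p, q, α, β be real numbers with p > 1, q > 1, α > 0, β > 0 and (α+1)/p + (β+1)/q = 1. Let (Ω, μ) be a measure space, let u, v and uₙ, vₙ (n ∈ ℕ) be measurable real-valued functions on Ω with u, uₙ ∈ L^p(μ) and v, vₙ ∈ L^q(μ), and suppose ∫_Ω |uₙ − u|^p dμ → 0 and ∫_Ω |vₙ − v|^q dμ → 0 as n → ∞. Then for each n the function x ↦ sign(uₙ(x))·|uₙ(x)|^α·|vₙ(x)|^{β+1}·(uₙ(x) − u(x)) is integrable and ∫_Ω sign(uₙ)·|uₙ|^α·|vₙ|^{β+1}·(uₙ − u) dμ → 0 as n → ∞. -/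
open MeasureTheory Filter
open scoped ENNReal NNReal

lemma measurable_realSign : Measurable Real.sign := by
  have : Real.sign = fun r : ℝ => if r < 0 then (-1 : ℝ) else if 0 < r then 1 else 0 := rfl
  rw [this]
  exact Measurable.ite (measurableSet_lt measurable_id measurable_const) measurable_const
    (Measurable.ite (measurableSet_lt measurable_const measurable_id) measurable_const
      measurable_const)

lemma abs_realSign_le_one (r : ℝ) : |Real.sign r| ≤ 1 := by
  rcases Real.sign_apply_eq r with h | h | h <;> rw [h] <;> norm_num

/-- Integrability of `|f - g| ^ p` given that of `|f| ^ p` and `|g| ^ p`. -/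
lemma integrable_abs_sub_rpow {Ω : Type*} [MeasurableSpace Ω] (μ : Measure Ω) {p : ℝ}
    (hp : 0 ≤ p) {f g : Ω → ℝ} (hf : Measurable f) (hg : Measurable g)
    (hfp : Integrable (fun x => |f x| ^ p) μ) (hgp : Integrable (fun x => |g x| ^ p) μ) :
    Integrable (fun x => |f x - g x| ^ p) μ := by
  refine (((hfp.add hgp).const_mul ((2:ℝ) ^ p)).mono'
    (((hf.sub hg).abs.pow measurable_const).aestronglyMeasurable) ?_)
  filter_upwards with x
  rw [Real.norm_of_nonneg (Real.rpow_nonneg (abs_nonneg _) _)]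
  have h1 : |f x - g x| ≤ |f x| + |g x| := abs_sub _ _
  have h2 : |f x| + |g x| ≤ 2 * max |f x| |g x| := by
    rcases max_cases |f x| |g x| with ⟨hm, hle⟩ | ⟨hm, hle⟩ <;> rw [hm] <;> linarith
  have h3 : |f x - g x| ^ p ≤ (2 * max |f x| |g x|) ^ p :=
    Real.rpow_le_rpow (abs_nonneg _) (h1.trans h2) hp
  have h4 : (2 * max |f x| |g x|) ^ p = 2 ^ p * max |f x| |g x| ^ p :=
    Real.mul_rpow (by norm_num) (le_max_iff.mpr (Or.inl (abs_nonneg _)))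
  have h5 : max |f x| |g x| ^ p ≤ |f x| ^ p + |g x| ^ p := by
    rcases max_cases |f x| |g x| with ⟨hm, _⟩ | ⟨hm, _⟩ <;> rw [hm]
    · nlinarith [Real.rpow_nonneg (abs_nonneg (g x)) p]
    · nlinarith [Real.rpow_nonneg (abs_nonneg (f x)) p]
  calc |f x - g x| ^ p ≤ 2 ^ p * max |f x| |g x| ^ p := by rw [← h4]; exact h3
    _ ≤ 2 ^ p * (|f x| ^ p + |g x| ^ p) := by
        have : (0:ℝ) ≤ 2 ^ p := Real.rpow_nonneg (by norm_num) p
        nlinarith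


/-- Three-factor Hölder inequality specialized to our exponents. -/
lemma holder_three {Ω : Type*} [MeasurableSpace Ω] (μ : Measure Ω) {p q α β : ℝ}
    (hp : 1 < p) (hq : 1 < q) (hα : 0 < α) (hβ : 0 < β)
    (hpq : (α + 1) / p + (β + 1) / q = 1)
    {w z d : Ω → ℝ} (hw : Measurable w) (hz : Measurable z) (hd : Measurable d) :
    ∫⁻ x, ENNReal.ofReal |w x| ^ α * ENNReal.ofReal |z x| ^ (β + 1)
        * ENNReal.ofReal |d x| ∂μ ≤
      (∫⁻ x, ENNReal.ofReal |w x| ^ p ∂μ) ^ (α / p)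
        * (∫⁻ x, ENNReal.ofReal |z x| ^ q ∂μ) ^ ((β + 1) / q)
        * (∫⁻ x, ENNReal.ofReal |d x| ^ p ∂μ) ^ (1 / p) := by
  have hp0 : (0:ℝ) < p := by linarith
  have hq0 : (0:ℝ) < q := by linarith
  have hα1 : (0:ℝ) < α + 1 := by linarith
  have hβ1 : (0:ℝ) < β + 1 := by linarith
  -- (α+1)/p < 1, hence α+1 < p ; similarly β+1 < q
  have hap : α + 1 < p := by
    have h1 : (β + 1) / q > 0 := div_pos hβ1 hq0
    have : (α + 1) / p < 1 := by linarith
    calc α + 1 = ((α+1)/p) * p := by field_simp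
      _ < 1 * p := by exact mul_lt_mul_of_pos_right this hp0
      _ = p := one_mul p
  have hbq : β + 1 < q := by
    have h1 : (α + 1) / p > 0 := div_pos hα1 hp0
    have : (β + 1) / q < 1 := by linarith
    calc β + 1 = ((β+1)/q) * q := by field_simp
      _ < 1 * q := by exact mul_lt_mul_of_pos_right this hq0
      _ = q := one_mul q
  set r := p / (α + 1) with hr
  set s := q / (β + 1) with hs
  have hrs : r.HolderConjugate s := by
    rw [Real.holderConjugate_iff]
    constructor
    · rw [hr]; rw [lt_div_iff₀ hα1]; linarith
    · rw [hr, hs]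
      rw [inv_div, inv_div]
      exact hpq
  have hab : ((α + 1)/α).HolderConjugate (α + 1) := by
    rw [Real.holderConjugate_iff]
    constructor
    · rw [lt_div_iff₀ hα]; linarith
    · rw [inv_div]
      field_simp
  set W := fun x => ENNReal.ofReal |w x| with hW
  set Z := fun x => ENNReal.ofReal |z x| with hZ
  set D := fun x => ENNReal.ofReal |d x| with hD
  have hWm : Measurable W := hw.abs.ennreal_ofReal
  have hZm : Measurable Z := hz.abs.ennreal_ofReal
  have hDm : Measurable D := hd.abs.ennreal_ofReal
  -- Step 1 : Hölder for (W^α * D) and Z^(β+1) with exponents r, s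
  have step1 :
      ∫⁻ x, W x ^ α * Z x ^ (β + 1) * D x ∂μ ≤
        (∫⁻ x, (W x ^ α * D x) ^ r ∂μ) ^ (1 / r)
          * (∫⁻ x, Z x ^ q ∂μ) ^ ((β + 1) / q) := by
    have h := ENNReal.lintegral_mul_le_Lp_mul_Lq μ hrs
      (f := fun x => W x ^ α * D x) (g := fun x => Z x ^ (β + 1))
      (((hWm.pow measurable_const).mul hDm).aemeasurable)
      ((hZm.pow measurable_const).aemeasurable)
    calc ∫⁻ x, W x ^ α * Z x ^ (β + 1) * D x ∂μ
        = ∫⁻ x, (fun x => W x ^ α * D x) x * (fun x => Z x ^ (β + 1)) x ∂μ := by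
          congr 1; funext x; ring
      _ ≤ (∫⁻ x, (W x ^ α * D x) ^ r ∂μ) ^ (1 / r)
            * (∫⁻ x, (Z x ^ (β + 1)) ^ s ∂μ) ^ (1 / s) := h
      _ = (∫⁻ x, (W x ^ α * D x) ^ r ∂μ) ^ (1 / r)
            * (∫⁻ x, Z x ^ q ∂μ) ^ ((β + 1) / q) := by
          congr 1
          · congr 1
            · congr 1; funext x
              rw [← ENNReal.rpow_mul]
              congr 1
              rw [hs]; field_simp
            · rw [hs, one_div, inv_div]
  -- Step 2 : Hölder for W^(α r) and D^r with exponents (α+1)/α and α+1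
  have step2 :
      (∫⁻ x, (W x ^ α * D x) ^ r ∂μ) ^ (1 / r) ≤
        (∫⁻ x, W x ^ p ∂μ) ^ (α / p) * (∫⁻ x, D x ^ p ∂μ) ^ (1 / p) := by
    have h := ENNReal.lintegral_mul_le_Lp_mul_Lq μ hab
      (f := fun x => W x ^ (α * r)) (g := fun x => D x ^ r)
      ((hWm.pow measurable_const).aemeasurable)
      ((hDm.pow measurable_const).aemeasurable)
    have e0 : ∫⁻ a, ((fun x => W x ^ (α * r)) * fun x => D x ^ r) a ∂μ
        = ∫⁻ x, (W x ^ α * D x) ^ r ∂μ := by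
      apply lintegral_congr; intro x
      simp only [Pi.mul_apply]
      rw [ENNReal.mul_rpow_of_nonneg _ _ (by positivity : (0:ℝ) ≤ r), ← ENNReal.rpow_mul]
    have e1 : ∫⁻ a, (fun x => W x ^ (α * r)) a ^ ((α+1)/α) ∂μ = ∫⁻ x, W x ^ p ∂μ := by
      apply lintegral_congr; intro x
      rw [← ENNReal.rpow_mul]
      congr 1
      rw [hr]; field_simp
    have e2 : ∫⁻ a, (fun x => D x ^ r) a ^ (α+1) ∂μ = ∫⁻ x, D x ^ p ∂μ := by
      apply lintegral_congr; intro x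
      rw [← ENNReal.rpow_mul]
      congr 1
      rw [hr]; field_simp
    have e3 : 1 / ((α+1)/α) = α / (α+1) := by rw [one_div, inv_div]
    rw [e0, e1, e2, e3] at h
    have h2 := ENNReal.rpow_le_rpow h (by positivity : (0:ℝ) ≤ 1 / r)
    rw [ENNReal.mul_rpow_of_nonneg _ _ (by positivity : (0:ℝ) ≤ 1 / r),
      ← ENNReal.rpow_mul, ← ENNReal.rpow_mul] at h2
    have eA : α / (α+1) * (1/r) = α / p := by rw [hr]; field_simp
    have eC : 1 / (α+1) * (1/r) = 1 / p := by rw [hr]; field_simp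
    rw [eA, eC] at h2
    exact h2
  calc ∫⁻ x, W x ^ α * Z x ^ (β + 1) * D x ∂μ
      ≤ (∫⁻ x, (W x ^ α * D x) ^ r ∂μ) ^ (1 / r)
          * (∫⁻ x, Z x ^ q ∂μ) ^ ((β + 1) / q) := step1
    _ ≤ ((∫⁻ x, W x ^ p ∂μ) ^ (α / p) * (∫⁻ x, D x ^ p ∂μ) ^ (1 / p))
          * (∫⁻ x, Z x ^ q ∂μ) ^ ((β + 1) / q) :=
        mul_le_mul_left step2 _
    _ = (∫⁻ x, W x ^ p ∂μ) ^ (α / p) * (∫⁻ x, Z x ^ q ∂μ) ^ ((β + 1) / q)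
          * (∫⁻ x, D x ^ p ∂μ) ^ (1 / p) := by ring


/-- Conversion between the Bochner integral and the lintegral of a power. -/
lemma lintegral_ofReal_abs_rpow {Ω : Type*} [MeasurableSpace Ω] {μ : Measure Ω} {r : ℝ}
    (hr : 0 ≤ r) {f : Ω → ℝ} (hint : Integrable (fun x => |f x| ^ r) μ) :
    ∫⁻ x, ENNReal.ofReal |f x| ^ r ∂μ = ENNReal.ofReal (∫ x, |f x| ^ r ∂μ) := by
  calc ∫⁻ x, ENNReal.ofReal |f x| ^ r ∂μ
      = ∫⁻ x, ENNReal.ofReal (|f x| ^ r) ∂μ :=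
        lintegral_congr fun x => ENNReal.ofReal_rpow_of_nonneg (abs_nonneg _) hr
    _ = ENNReal.ofReal (∫ x, |f x| ^ r ∂μ) :=
        (MeasureTheory.ofReal_integral_eq_lintegral_ofReal hint
          (Filter.Eventually.of_forall fun x => Real.rpow_nonneg (abs_nonneg _) _)).symm

/-- A convergence lemma for the terms `∫ |uₙ|^(α-1) uₙ |vₙ|^(β+1) (uₙ - u) dμ`,
written with `Real.sign`. -/
theorem coupling_sign_convergence
    (p q α β : ℝ) (hp : 1 < p) (hq : 1 < q) (hα : 0 < α) (hβ : 0 < β)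
    (hpq : (α + 1) / p + (β + 1) / q = 1)
    {Ω : Type*} [MeasurableSpace Ω] (μ : Measure Ω)
    (u v : Ω → ℝ) (un vn : ℕ → Ω → ℝ)
    (hu : Measurable u) (hv : Measurable v)
    (hun : ∀ n, Measurable (un n)) (hvn : ∀ n, Measurable (vn n))
    (hup : Integrable (fun x => |u x| ^ p) μ)
    (hvq : Integrable (fun x => |v x| ^ q) μ)
    (hunp : ∀ n, Integrable (fun x => |un n x| ^ p) μ)
    (hvnq : ∀ n, Integrable (fun x => |vn n x| ^ q) μ)
    (hconvu : Tendsto (fun n => ∫ x, |un n x - u x| ^ p ∂μ) atTop (nhds 0))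
    (hconvv : Tendsto (fun n => ∫ x, |vn n x - v x| ^ q ∂μ) atTop (nhds 0)) :
    (∀ n, Integrable
        (fun x => Real.sign (un n x) * |un n x| ^ α * |vn n x| ^ (β + 1) * (un n x - u x)) μ) ∧
      Tendsto
        (fun n => ∫ x,
          Real.sign (un n x) * |un n x| ^ α * |vn n x| ^ (β + 1) * (un n x - u x) ∂μ)
        atTop (nhds 0) := by
  have hp0 : (0:ℝ) < p := by linarith
  have hq0 : (0:ℝ) < q := by linarith
  -- integrability of difference powers
  have hdu : ∀ n, Integrable (fun x => |un n x - u x| ^ p) μ := fun n =>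
    integrable_abs_sub_rpow μ hp0.le (hun n) hu (hunp n) hup
  have hdv : ∀ n, Integrable (fun x => |vn n x - v x| ^ q) μ := fun n =>
    integrable_abs_sub_rpow μ hq0.le (hvn n) hv (hvnq n) hvq
  -- the relevant lintegrals
  set A : ℕ → ℝ≥0∞ := fun n => ∫⁻ x, ENNReal.ofReal |un n x| ^ p ∂μ with hA
  set B : ℕ → ℝ≥0∞ := fun n => ∫⁻ x, ENNReal.ofReal |vn n x| ^ q ∂μ with hB
  set C : ℕ → ℝ≥0∞ := fun n => ∫⁻ x, ENNReal.ofReal |un n x - u x| ^ p ∂μ with hC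
  set U : ℝ≥0∞ := ∫⁻ x, ENNReal.ofReal |u x| ^ p ∂μ with hU
  set V : ℝ≥0∞ := ∫⁻ x, ENNReal.ofReal |v x| ^ q ∂μ with hV
  have hAfin : ∀ n, A n ≠ ∞ := fun n => by
    rw [hA]; simp only; rw [lintegral_ofReal_abs_rpow hp0.le (hunp n)]; exact ENNReal.ofReal_ne_top
  have hBfin : ∀ n, B n ≠ ∞ := fun n => by
    rw [hB]; simp only; rw [lintegral_ofReal_abs_rpow hq0.le (hvnq n)]; exact ENNReal.ofReal_ne_top
  have hCfin : ∀ n, C n ≠ ∞ := fun n => by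
    rw [hC]; simp only; rw [lintegral_ofReal_abs_rpow hp0.le (hdu n)]; exact ENNReal.ofReal_ne_top
  have hUfin : U ≠ ∞ := by
    rw [hU, lintegral_ofReal_abs_rpow hp0.le hup]; exact ENNReal.ofReal_ne_top
  have hVfin : V ≠ ∞ := by
    rw [hV, lintegral_ofReal_abs_rpow hq0.le hvq]; exact ENNReal.ofReal_ne_top
  -- pointwise bound on the integrand
  have hre : ∀ n x, ‖Real.sign (un n x) * |un n x| ^ α * |vn n x| ^ (β + 1) * (un n x - u x)‖
      ≤ |un n x| ^ α * |vn n x| ^ (β + 1) * |un n x - u x| := by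
    intro n x
    have h1 : (0:ℝ) ≤ |un n x| ^ α := Real.rpow_nonneg (abs_nonneg _) _
    have h2 : (0:ℝ) ≤ |vn n x| ^ (β + 1) := Real.rpow_nonneg (abs_nonneg _) _
    have h3 := abs_realSign_le_one (un n x)
    have h4 : (0:ℝ) ≤ |Real.sign (un n x)| := abs_nonneg _
    rw [Real.norm_eq_abs, abs_mul, abs_mul, abs_mul, abs_of_nonneg h1, abs_of_nonneg h2]
    have h5 : (0:ℝ) ≤ |un n x - u x| := abs_nonneg _
    nlinarith [mul_nonneg (mul_nonneg h1 h2) h5]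
  -- the Hölder bound on the lintegral of the norm
  have hbound : ∀ n,
      ∫⁻ x, ENNReal.ofReal
          ‖Real.sign (un n x) * |un n x| ^ α * |vn n x| ^ (β + 1) * (un n x - u x)‖ ∂μ
        ≤ A n ^ (α / p) * B n ^ ((β + 1) / q) * C n ^ (1 / p) := by
    intro n
    refine le_trans (lintegral_mono fun x => ?_)
      (holder_three μ hp hq hα hβ hpq (hun n) (hvn n) ((hun n).sub hu))
    have heq : ENNReal.ofReal |un n x| ^ α * ENNReal.ofReal |vn n x| ^ (β + 1)
        * ENNReal.ofReal |un n x - u x|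
        = ENNReal.ofReal (|un n x| ^ α * |vn n x| ^ (β + 1) * |un n x - u x|) := by
      rw [ENNReal.ofReal_rpow_of_nonneg (abs_nonneg _) hα.le,
        ENNReal.ofReal_rpow_of_nonneg (abs_nonneg _) (by linarith : (0:ℝ) ≤ β + 1),
        ← ENNReal.ofReal_mul (Real.rpow_nonneg (abs_nonneg _) _),
        ← ENNReal.ofReal_mul
          (mul_nonneg (Real.rpow_nonneg (abs_nonneg _) _) (Real.rpow_nonneg (abs_nonneg _) _))]
    rw [heq]
    exact ENNReal.ofReal_le_ofReal (hre n x)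
  -- measurability of the integrand
  have hmeas : ∀ n, Measurable
      (fun x => Real.sign (un n x) * |un n x| ^ α * |vn n x| ^ (β + 1) * (un n x - u x)) :=
    fun n => (((measurable_realSign.comp (hun n)).mul
      ((hun n).abs.pow measurable_const)).mul ((hvn n).abs.pow measurable_const)).mul
      ((hun n).sub hu)
  -- integrability
  have hint : ∀ n, Integrable
      (fun x => Real.sign (un n x) * |un n x| ^ α * |vn n x| ^ (β + 1) * (un n x - u x)) μ := by
    intro n
    refine ⟨(hmeas n).aestronglyMeasurable, ?_⟩
    rw [hasFiniteIntegral_iff_norm]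
    refine lt_of_le_of_lt (hbound n) ?_
    exact ENNReal.mul_lt_top
      (ENNReal.mul_lt_top (ENNReal.rpow_lt_top_of_nonneg (by positivity) (hAfin n))
        (ENNReal.rpow_lt_top_of_nonneg (by positivity) (hBfin n)))
      (ENNReal.rpow_lt_top_of_nonneg (by positivity) (hCfin n))
  refine ⟨hint, ?_⟩
  -- convergence of C to zero
  have hCconv : Tendsto C atTop (nhds 0) := by
    have h1 : Tendsto (fun n => ENNReal.ofReal (∫ x, |un n x - u x| ^ p ∂μ)) atTop
        (nhds (ENNReal.ofReal 0)) := ENNReal.tendsto_ofReal hconvu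
    rw [ENNReal.ofReal_zero] at h1
    refine h1.congr fun n => ?_
    rw [hC]; simp only; rw [lintegral_ofReal_abs_rpow hp0.le (hdu n)]
  have hCvconv : Tendsto (fun n => ∫⁻ x, ENNReal.ofReal |vn n x - v x| ^ q ∂μ) atTop (nhds 0) := by
    have h1 : Tendsto (fun n => ENNReal.ofReal (∫ x, |vn n x - v x| ^ q ∂μ)) atTop
        (nhds (ENNReal.ofReal 0)) := ENNReal.tendsto_ofReal hconvv
    rw [ENNReal.ofReal_zero] at h1
    refine h1.congr fun n => ?_
    rw [lintegral_ofReal_abs_rpow hq0.le (hdv n)]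
  -- Minkowski-type bound for A
  have hminkA : ∀ n, A n ^ (1/p) ≤ C n ^ (1/p) + U ^ (1/p) := by
    intro n
    have hpt : ∀ x, ENNReal.ofReal |un n x|
        ≤ ((fun x => ENNReal.ofReal |un n x - u x|) + fun x => ENNReal.ofReal |u x|) x := by
      intro x
      simp only [Pi.add_apply]
      rw [← ENNReal.ofReal_add (abs_nonneg _) (abs_nonneg _)]
      refine ENNReal.ofReal_le_ofReal ?_
      calc |un n x| = |(un n x - u x) + u x| := by ring_nf
        _ ≤ |un n x - u x| + |u x| := abs_add_le _ _
    have h1 : A n ≤ ∫⁻ x, ((fun x => ENNReal.ofReal |un n x - u x|)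
        + fun x => ENNReal.ofReal |u x|) x ^ p ∂μ :=
      lintegral_mono fun x => ENNReal.rpow_le_rpow (hpt x) hp0.le
    calc A n ^ (1/p) ≤ (∫⁻ x, ((fun x => ENNReal.ofReal |un n x - u x|)
          + fun x => ENNReal.ofReal |u x|) x ^ p ∂μ) ^ (1/p) :=
        ENNReal.rpow_le_rpow h1 (by positivity)
      _ ≤ C n ^ (1/p) + U ^ (1/p) :=
        ENNReal.lintegral_Lp_add_le (((hun n).sub hu).abs.ennreal_ofReal.aemeasurable)
          (hu.abs.ennreal_ofReal.aemeasurable) hp.le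
  have hminkB : ∀ n, B n ^ (1/q) ≤ (∫⁻ x, ENNReal.ofReal |vn n x - v x| ^ q ∂μ) ^ (1/q)
      + V ^ (1/q) := by
    intro n
    have hpt : ∀ x, ENNReal.ofReal |vn n x|
        ≤ ((fun x => ENNReal.ofReal |vn n x - v x|) + fun x => ENNReal.ofReal |v x|) x := by
      intro x
      simp only [Pi.add_apply]
      rw [← ENNReal.ofReal_add (abs_nonneg _) (abs_nonneg _)]
      refine ENNReal.ofReal_le_ofReal ?_
      calc |vn n x| = |(vn n x - v x) + v x| := by ring_nf
        _ ≤ |vn n x - v x| + |v x| := abs_add_le _ _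
    have h1 : B n ≤ ∫⁻ x, ((fun x => ENNReal.ofReal |vn n x - v x|)
        + fun x => ENNReal.ofReal |v x|) x ^ q ∂μ :=
      lintegral_mono fun x => ENNReal.rpow_le_rpow (hpt x) hq0.le
    calc B n ^ (1/q) ≤ (∫⁻ x, ((fun x => ENNReal.ofReal |vn n x - v x|)
          + fun x => ENNReal.ofReal |v x|) x ^ q ∂μ) ^ (1/q) :=
        ENNReal.rpow_le_rpow h1 (by positivity)
      _ ≤ (∫⁻ x, ENNReal.ofReal |vn n x - v x| ^ q ∂μ) ^ (1/q) + V ^ (1/q) :=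
        ENNReal.lintegral_Lp_add_le (((hvn n).sub hv).abs.ennreal_ofReal.aemeasurable)
          (hv.abs.ennreal_ofReal.aemeasurable) hq.le
  -- eventual bounds
  set K1 : ℝ≥0∞ := (1 + U ^ (1/p)) ^ α with hK1
  set K2 : ℝ≥0∞ := (1 + V ^ (1/q)) ^ (β + 1) with hK2
  have hAev : ∀ᶠ n in atTop, A n ^ (α / p) ≤ K1 := by
    filter_upwards [hCconv (Iio_mem_nhds (by norm_num : (0:ℝ≥0∞) < 1))] with n hn
    have h2 : C n ^ (1/p) ≤ 1 := by
      calc C n ^ (1/p) ≤ 1 ^ (1/p) := ENNReal.rpow_le_rpow (le_of_lt hn) (by positivity)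
        _ = 1 := ENNReal.one_rpow _
    have h3 : A n ^ (1/p) ≤ 1 + U ^ (1/p) := (hminkA n).trans (add_le_add_left h2 _)
    have h4 : A n ^ (α / p) = (A n ^ (1/p)) ^ α := by
      rw [← ENNReal.rpow_mul]
      congr 1
      field_simp
    rw [h4, hK1]
    exact ENNReal.rpow_le_rpow h3 hα.le
  have hBev : ∀ᶠ n in atTop, B n ^ ((β + 1) / q) ≤ K2 := by
    filter_upwards [hCvconv (Iio_mem_nhds (by norm_num : (0:ℝ≥0∞) < 1))] with n hn
    have h2 : (∫⁻ x, ENNReal.ofReal |vn n x - v x| ^ q ∂μ) ^ (1/q) ≤ 1 := by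
      calc (∫⁻ x, ENNReal.ofReal |vn n x - v x| ^ q ∂μ) ^ (1/q) ≤ 1 ^ (1/q) :=
          ENNReal.rpow_le_rpow (le_of_lt hn) (by positivity)
        _ = 1 := ENNReal.one_rpow _
    have h3 : B n ^ (1/q) ≤ 1 + V ^ (1/q) := (hminkB n).trans (add_le_add_left h2 _)
    have h4 : B n ^ ((β + 1) / q) = (B n ^ (1/q)) ^ (β + 1) := by
      rw [← ENNReal.rpow_mul]
      congr 1
      field_simp
    rw [h4, hK2]
    exact ENNReal.rpow_le_rpow h3 (by linarith)
  have hK1fin : K1 ≠ ∞ := ENNReal.rpow_ne_top_of_nonneg hα.le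
    (ENNReal.add_ne_top.mpr ⟨ENNReal.one_ne_top, ENNReal.rpow_ne_top_of_nonneg (by positivity) hUfin⟩)
  have hK2fin : K2 ≠ ∞ := ENNReal.rpow_ne_top_of_nonneg (by linarith)
    (ENNReal.add_ne_top.mpr ⟨ENNReal.one_ne_top, ENNReal.rpow_ne_top_of_nonneg (by positivity) hVfin⟩)
  -- the dominating sequence tends to zero
  have hKC : Tendsto (fun n => K1 * K2 * C n ^ (1/p)) atTop (nhds 0) := by
    have h1 : Tendsto (fun n => C n ^ (1/p)) atTop (nhds 0) := by
      have := Filter.Tendsto.ennrpow_const (1/p) hCconv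
      rwa [ENNReal.zero_rpow_of_pos (by positivity)] at this
    have h2 := ENNReal.Tendsto.const_mul h1
      (Or.inr (ENNReal.mul_ne_top hK1fin hK2fin))
    rwa [mul_zero] at h2
  -- squeeze
  have hE : Tendsto (fun n => ∫⁻ x, ENNReal.ofReal
      ‖Real.sign (un n x) * |un n x| ^ α * |vn n x| ^ (β + 1) * (un n x - u x)‖ ∂μ)
      atTop (nhds 0) := by
    refine tendsto_of_tendsto_of_tendsto_of_le_of_le' tendsto_const_nhds hKC
      (Eventually.of_forall fun n => zero_le) ?_
    filter_upwards [hAev, hBev] with n h1 h2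
    refine (hbound n).trans ?_
    exact mul_le_mul' (mul_le_mul' h1 h2) le_rfl
  have hEfin : ∀ n, (∫⁻ x, ENNReal.ofReal
      ‖Real.sign (un n x) * |un n x| ^ α * |vn n x| ^ (β + 1) * (un n x - u x)‖ ∂μ) ≠ ∞ :=
    fun n => ((hasFiniteIntegral_iff_norm _).mp (hint n).2).ne
  have hEto : Tendsto (fun n => (∫⁻ x, ENNReal.ofReal
      ‖Real.sign (un n x) * |un n x| ^ α * |vn n x| ^ (β + 1) * (un n x - u x)‖ ∂μ).toReal)
      atTop (nhds 0) := by
    have := (ENNReal.tendsto_toReal (by simp : (0:ℝ≥0∞) ≠ ∞)).comp hE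
    simpa [Function.comp_def] using this
  rw [tendsto_zero_iff_norm_tendsto_zero]
  exact squeeze_zero (fun n => norm_nonneg _)
    (fun n => norm_integral_le_lintegral_norm _) hEto
end
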